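/- arXiv:1607.07557 — 7 statements merged into one kernel-verified Lean document; each statement's English description precedes it below -/
import Mathlib

section
/- Let t0 ∈ ℤ, a, b > 0, d ≥ 0, and τ̄ ∈ ℕ. Let τ : ℤ → ℕ satisfy τ(t) ≤ τ̄ for all t, and let x : ℤ → ℝ satisfy x(t) > 0 for all t and x(t+1) − x(t) ≥ x(t)·(b − a·x(t − τ(t))) + d for all t ≥ t0. Suppose there is N > 0 with limsup_{t→∞} x(t) ≤ N and 1 − a·N > 0. Then liminf_{t→∞} x(t) ≥ (b/a)·(1 − a·N)^{τ̄}. -/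
open Filter Set Topology

/-!
Fix `M > N` with `aM < 1`; eventually `x ≤ M`, so `x(t + 1) ≥ (1 - aM) x(t)` and a delayed
value is at most `(1 - aM)^{-τ̄}` times the present one. If `x` decreases at `t`, the delayed
value `u` lies in `(b/a, 1/a)`, and `u (1 + b - a u) ≥ b / a` there gives
`x(t + 1) ≥ (b/a) (1 - aM)^{τ̄}`. Hence either `x` eventually stays above this level, or `x` is
eventually nondecreasing; in the latter case it cannot stay below any `r < b / a`, because its
increments would be bounded below by `x(T) (b - a r) > 0`. Finally let `M ↓ N`.
-/

lemma div_le_mul_one_add_sub {a b u : ℝ} (ha : 0 < a) (hbu : b ≤ a * u) (hu : a * u ≤ 1) :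
    b / a ≤ u * (1 + (b - a * u)) := by
  rw [div_le_iff₀ ha]
  -- `a u (1 + b - a u) - b = (a u - b)(1 - a u)`
  nlinarith [mul_nonneg (sub_nonneg.2 hbu) (sub_nonneg.2 hu)]

lemma monotoneOn_or_eventually_le_of_min_le_succ {α : Type*} [LinearOrder α] {x : ℤ → α}
    {c : α} {T : ℤ} (h : ∀ t ≥ T, min (x t) c ≤ x (t + 1)) :
    MonotoneOn x (Ici T) ∨ ∀ᶠ t in atTop, c ≤ x t := by
  by_cases hreach : ∃ s ≥ T, c ≤ x s
  · obtain ⟨s, hs, hcs⟩ := hreach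
    refine .inr (eventually_atTop.2 ⟨s, Int.leInduction hcs fun t hst hct => ?_⟩)
    simpa [min_eq_right hct] using h t (hs.trans hst)
  · push Not at hreach
    refine .inl (monotoneOn_of_le_succ ordConnected_Ici fun t _ ht _ => ?_)
    simpa [min_eq_left (hreach t ht).le, Order.succ_eq_add_one] using h t ht

lemma exists_lt_of_add_le_succ {u : ℤ → ℝ} {δ : ℝ} {T : ℤ} (hδ : 0 < δ)
    (h : ∀ t ≥ T, u t + δ ≤ u (t + 1)) (r : ℝ) : ∃ t ≥ T, r < u t := by
  have hlin (n : ℕ) : u T + n * δ ≤ u (T + n) := by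
    induction n with
    | zero => simp
    | succ n ih =>
      have := h (T + n) (by omega)
      push_cast
      rw [← add_assoc]
      linarith
  obtain ⟨n, hn⟩ := exists_nat_gt ((r - u T) / δ)
  refine ⟨T + n, by omega, ?_⟩
  have := (div_lt_iff₀ hδ).1 hn
  linarith [hlin n]

lemma coe_le_liminf_of_forall_lt {ι : Type*} {f : Filter ι} {u : ι → ℝ} {c : ℝ}
    (h : ∀ r < c, ∀ᶠ i in f, r < u i) : (c : EReal) ≤ liminf (fun i => (u i : EReal)) f := by
  rw [le_liminf_iff]
  intro y hy
  obtain ⟨r, hyr, hrc⟩ := EReal.lt_iff_exists_real_btwn.1 hy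
  exact (h r (EReal.coe_lt_coe_iff.1 hrc)).mono fun i hi => hyr.trans (EReal.coe_lt_coe_iff.2 hi)

namespace DelayedLogistic

variable {a b M r : ℝ} {τbar : ℕ} {τ : ℤ → ℕ} {x : ℤ → ℝ} {T : ℤ}

lemma le_sub_delay (hτ : ∀ t, τ t ≤ τbar) {t : ℤ} (ht : T + τbar ≤ t) : T ≤ t - τ t := by
  have := hτ t
  omega

variable (hτ : ∀ t, τ t ≤ τbar) (hxpos : ∀ t, 0 < x t)
  (hstep : ∀ t ≥ T, x t * (1 + (b - a * x (t - τ t))) ≤ x (t + 1))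
include hτ hxpos hstep

lemma one_sub_mul_le_succ (ha : 0 ≤ a) (hb : 0 ≤ b) (hbound : ∀ t ≥ T, x t ≤ M) {t : ℤ}
    (ht : T + τbar ≤ t) : (1 - a * M) * x t ≤ x (t + 1) := by
  have hdelay := hbound _ (le_sub_delay hτ ht)
  calc (1 - a * M) * x t ≤ x t * (1 + (b - a * x (t - τ t))) := by
        nlinarith [mul_le_mul_of_nonneg_left hdelay ha, hxpos t]
    _ ≤ x (t + 1) := hstep t (by omega)

lemma one_sub_pow_mul_le_add (ha : 0 ≤ a) (hb : 0 ≤ b) (hbound : ∀ t ≥ T, x t ≤ M)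
    (haM : a * M ≤ 1) {s : ℤ} (hs : T + τbar ≤ s) (n : ℕ) :
    (1 - a * M) ^ n * x s ≤ x (s + n) := by
  induction n with
  | zero => simp
  | succ n ih =>
    calc (1 - a * M) ^ (n + 1) * x s = (1 - a * M) * ((1 - a * M) ^ n * x s) := by ring
      _ ≤ (1 - a * M) * x (s + n) := mul_le_mul_of_nonneg_left ih (by linarith)
      _ ≤ x (s + n + 1) := one_sub_mul_le_succ hτ hxpos hstep ha hb hbound (by omega)
      _ = x (s + (n + 1 : ℕ)) := by push_cast; rw [add_assoc]

lemma min_le_succ (ha : 0 < a) (hb : 0 < b) (hbound : ∀ t ≥ T, x t ≤ M) (haM : a * M < 1)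
    {t : ℤ} (ht : T + 2 * τbar ≤ t) :
    min (x t) (b / a * (1 - a * M) ^ τbar) ≤ x (t + 1) := by
  refine (le_or_gt (x t) (x (t + 1))).elim (fun hinc => (min_le_left _ _).trans hinc)
    fun hdec => (min_le_right _ _).trans ?_
  set u := x (t - τ t)
  have hstep_t := hstep t (by omega)
  have hbu : b < a * u := by nlinarith [hxpos t]
  have hau : a * u < 1 :=
    (mul_le_mul_of_nonneg_left (hbound _ (le_sub_delay hτ (by omega))) ha.le).trans_lt haM
  have hM : 0 ≤ a * M := mul_nonneg ha.le ((hxpos T).le.trans (hbound T le_rfl))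
  have hchain : (1 - a * M) ^ τ t * u ≤ x t := by
    simpa using one_sub_pow_mul_le_add hτ hxpos hstep ha.le hb.le hbound haM.le
      (s := t - τ t) (by have := hτ t; omega) (τ t)
  have hpow : (1 - a * M) ^ τbar ≤ (1 - a * M) ^ τ t :=
    pow_le_pow_of_le_one (by linarith) (by linarith) (hτ t)
  calc b / a * (1 - a * M) ^ τbar ≤ u * (1 + (b - a * u)) * (1 - a * M) ^ τ t :=
        mul_le_mul (div_le_mul_one_add_sub ha hbu.le hau.le) hpow (by positivity)
          (by nlinarith [hxpos (t - τ t)])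
    _ = (1 - a * M) ^ τ t * u * (1 + (b - a * u)) := by ring
    _ ≤ x t * (1 + (b - a * u)) := mul_le_mul_of_nonneg_right hchain (by linarith)
    _ ≤ x (t + 1) := hstep_t

lemma eventually_lt_of_monotoneOn (ha : 0 < a) (hmono : MonotoneOn x (Ici T)) (hr : r < b / a) :
    ∀ᶠ t in atTop, r < x t := by
  suffices ∃ s ≥ T, r < x s by
    obtain ⟨s, hs, hrs⟩ := this
    exact eventually_atTop.2 ⟨s, fun t hst => hrs.trans_le (hmono hs (hs.trans hst) hst)⟩
  by_contra! hle
  have hgap : 0 < b - a * r := by linarith [(lt_div_iff₀' ha).1 hr]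
  have hinc : ∀ t ≥ T + τbar, x t + x T * (b - a * r) ≤ x (t + 1) := fun t ht => by
    have hdelay := hle _ (le_sub_delay hτ ht)
    have hxT : x T ≤ x t := hmono (mem_Ici.2 le_rfl) (show T ≤ t by omega) (by omega)
    calc x t + x T * (b - a * r) ≤ x t + x t * (b - a * x (t - τ t)) := by
          nlinarith [mul_le_mul_of_nonneg_left hdelay (mul_nonneg (hxpos t).le ha.le),
            mul_le_mul_of_nonneg_right hxT hgap.le]
      _ = x t * (1 + (b - a * x (t - τ t))) := by ring
      _ ≤ x (t + 1) := hstep t (by omega)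
  obtain ⟨t, ht, hrt⟩ := exists_lt_of_add_le_succ (mul_pos (hxpos T) hgap) hinc r
  exact (hle t (by omega)).not_gt hrt

lemma eventually_lt_of_bounded (ha : 0 < a) (hb : 0 < b) (hbound : ∀ t ≥ T, x t ≤ M)
    (haM : a * M < 1) (hr : r < b / a * (1 - a * M) ^ τbar) : ∀ᶠ t in atTop, r < x t := by
  have hL : (1 - a * M) ^ τbar ≤ 1 :=
    pow_le_one₀ (by linarith) (by nlinarith [(hxpos T).trans_le (hbound T le_rfl)])
  rcases monotoneOn_or_eventually_le_of_min_le_succ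
      (fun t ht => min_le_succ hτ hxpos hstep ha hb hbound haM ht) with hmono | hreach
  · refine eventually_lt_of_monotoneOn hτ hxpos (fun t ht => hstep t (by omega)) ha hmono ?_
    exact hr.trans_le (mul_le_of_le_one_right (div_pos hb ha).le hL)
  · exact hreach.mono fun t ht => hr.trans_le ht

end DelayedLogistic

theorem discrete_delay_comparison_lower_general
    (t0 : ℤ) (a b d : ℝ) (τbar : ℕ)
    (ha : 0 < a) (hb : 0 < b) (hd : 0 ≤ d)
    (τ : ℤ → ℕ) (hτ : ∀ t, τ t ≤ τbar)
    (x : ℤ → ℝ) (hxpos : ∀ t, 0 < x t)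
    (hineq : ∀ t, t0 ≤ t →
      x t * (b - a * x (t - (τ t : ℤ))) + d ≤ x (t + 1) - x t)
    (N : ℝ)
    (hlimsup : Filter.limsup (fun t : ℤ => (x t : EReal)) atTop ≤ (N : EReal))
    (haN : 0 < 1 - a * N) :
    ((b / a * (1 - a * N) ^ τbar : ℝ) : EReal) ≤
      Filter.liminf (fun t : ℤ => (x t : EReal)) atTop := by
  refine coe_le_liminf_of_forall_lt fun r hr => ?_
  obtain ⟨M, hrM, hNM, haM⟩ : ∃ M, r < b / a * (1 - a * M) ^ τbar ∧ N < M ∧ a * M < 1 := by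
    have hc : Continuous fun M : ℝ => b / a * (1 - a * M) ^ τbar := by fun_prop
    have hmul : Continuous fun M : ℝ => a * M := by fun_prop
    have hev : ∀ᶠ M in 𝓝[>] N, (r < b / a * (1 - a * M) ^ τbar ∧ a * M < 1) ∧ N < M :=
      (((hc.tendsto N).eventually_const_lt hr).and ((hmul.tendsto N).eventually_lt_const
        (by linarith))).filter_mono nhdsWithin_le_nhds |>.and self_mem_nhdsWithin
    obtain ⟨M, ⟨hrM, haM⟩, hNM⟩ := hev.exists
    exact ⟨M, hrM, hNM, haM⟩
  obtain ⟨T, hT⟩ := eventually_atTop.1 <|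
    eventually_lt_of_limsup_lt (hlimsup.trans_lt (EReal.coe_lt_coe_iff.2 hNM))
  have hstep : ∀ t ≥ max t0 T, x t * (1 + (b - a * x (t - τ t))) ≤ x (t + 1) :=
    fun t ht => by linarith [hineq t (le_of_max_le_left ht)]
  have hbound : ∀ t ≥ max t0 T, x t ≤ M :=
    fun t ht => (EReal.coe_lt_coe_iff.1 (hT t (le_of_max_le_right ht))).le
  exact DelayedLogistic.eventually_lt_of_bounded hτ hxpos hstep ha hb hbound haM hrM

/-- Discrete comparison lemma (Lemma 3.1(ii) of the paper on `𝕋 = ℤ`, no impulses):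
lower bound for the delayed logistic-type difference inequality. -/
theorem discrete_delay_comparison_lower
    (t0 : ℤ) (a b d : ℝ) (τbar : ℕ)
    (ha : 0 < a) (hb : 0 < b) (hd : 0 ≤ d)
    (τ : ℤ → ℕ) (hτ : ∀ t, τ t ≤ τbar)
    (x : ℤ → ℝ) (hxpos : ∀ t, 0 < x t)
    (hineq : ∀ t, t0 ≤ t →
      x t * (b - a * x (t - (τ t : ℤ))) + d ≤ x (t + 1) - x t)
    (N : ℝ) (hN : 0 < N)
    (hlimsup : Filter.limsup (fun t : ℤ => (x t : EReal)) atTop ≤ (N : EReal))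
    (haN : 0 < 1 - a * N) :
    ((b / a * (1 - a * N) ^ τbar : ℝ) : EReal) ≤
      Filter.liminf (fun t : ℤ => (x t : EReal)) atTop :=
  discrete_delay_comparison_lower_general t0 a b d τbar ha hb hd τ hτ x hxpos hineq N hlimsup haN
end

section
/- Let t0 ∈ ℝ, A, B > 0, τ̄ ≥ 0, and let τ : ℝ → ℝ be continuous with 0 ≤ τ(t) ≤ τ̄ for all t. Let u : ℝ → ℝ be differentiable on [t0, ∞) and satisfy u'(t) ≤ B − A·exp(u(t − τ(t))) for all t ≥ t0. Then limsup_{t→∞} u(t) ≤ ln(B/A) + B·τ̄. -/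
/-!
Since `u' ≤ B`, the delayed value lags behind by at most `B τ̄`: `u (t - τ t) ≥ u t - B τ̄`.
Hence at every level `z > ln (B / A) + B τ̄` the inequality forces `u' ≤ B - A e^{z - B τ̄} < 0`
while `u ≥ z`. A function whose slope is bounded by a negative constant above a level
must drop below that level, and cannot cross it upwards again.
-/

open Filter Set Real

section DerivBounds

variable {f : ℝ → ℝ} {T : ℝ}

theorem sub_le_mul_sub_of_deriv_le_of_ge (hf : ∀ t, T ≤ t → DifferentiableAt ℝ f t) {C : ℝ}
    (hf' : ∀ t, T ≤ t → deriv f t ≤ C) {s t : ℝ} (hs : T ≤ s) (hst : s ≤ t) :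
    f t - f s ≤ C * (t - s) := by
  refine (convex_Ici T).image_sub_le_mul_sub_of_deriv_le
    (fun x hx => (hf x hx).continuousAt.continuousWithinAt) ?_ ?_ s hs t (hs.trans hst) hst
  · rw [interior_Ici]
    exact fun x hx => (hf x (le_of_lt hx)).differentiableWithinAt
  · rw [interior_Ici]
    exact fun x hx => hf' x (le_of_lt hx)

theorem le_of_deriv_neg_of_eq {c : ℝ} (hf : ∀ t, T ≤ t → DifferentiableAt ℝ f t)
    (hc : ∀ t, T ≤ t → f t = c → deriv f t < 0) {t₁ : ℝ} (hT : T ≤ t₁) (h₁ : f t₁ ≤ c)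
    {t : ℝ} (ht : t₁ ≤ t) : f t ≤ c :=
  image_le_of_deriv_right_lt_deriv_boundary' (B := fun _ => c)
    (fun x hx => (hf x (hT.trans hx.1)).continuousAt.continuousWithinAt)
    (fun x hx => (hf x (hT.trans hx.1)).hasDerivAt.hasDerivWithinAt) h₁ continuousOn_const
    (fun _ _ => hasDerivWithinAt_const _ _ _) (fun x hx => hc x (hT.trans hx.1))
    ⟨ht, le_rfl⟩

variable {c δ : ℝ}

theorem exists_le_of_deriv_le_neg (hδ : 0 < δ) (hf : ∀ t, T ≤ t → DifferentiableAt ℝ f t)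
    (hbound : ∀ t, T ≤ t → c ≤ f t → deriv f t ≤ -δ) : ∃ t, T ≤ t ∧ f t ≤ c := by
  by_contra! habove
  set t := T + (f T - c) / δ
  have hTt : T ≤ t := le_add_of_nonneg_right (div_nonneg (sub_nonneg.2 (habove T le_rfl).le) hδ.le)
  have hdrop : f t - f T ≤ -δ * (t - T) :=
    sub_le_mul_sub_of_deriv_le_of_ge hf (fun s hs => hbound s hs (habove s hs).le) le_rfl hTt
  have hδt : δ * (t - T) = f T - c := by
    simp only [t, add_sub_cancel_left]
    field_simp
  linarith [habove t hTt]

theorem eventually_le_of_deriv_le_neg (hδ : 0 < δ) (hf : ∀ t, T ≤ t → DifferentiableAt ℝ f t)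
    (hbound : ∀ t, T ≤ t → c ≤ f t → deriv f t ≤ -δ) : ∀ᶠ t in atTop, f t ≤ c := by
  obtain ⟨t₁, hT, h₁⟩ := exists_le_of_deriv_le_neg hδ hf hbound
  filter_upwards [eventually_ge_atTop t₁] with t ht
  exact le_of_deriv_neg_of_eq hf
    (fun s hs hfs => (hbound s hs hfs.ge).trans_lt (neg_lt_zero.2 hδ)) hT h₁ ht

end DerivBounds

theorem EReal.limsup_coe_le_of_eventually_le {α : Type*} {l : Filter α} {u : α → ℝ} {M : ℝ}
    (h : ∀ z, M < z → ∀ᶠ t in l, u t ≤ z) : limsup (fun t => (u t : EReal)) l ≤ M :=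
  EReal.le_of_forall_lt_iff_le.1 fun z hz =>
    limsup_le_of_le (by isBoundedDefault) <|
      (h z (EReal.coe_lt_coe_iff.1 hz)).mono fun _ ht => EReal.coe_le_coe_iff.2 ht

theorem log_delay_upper_estimate_general
    (t0 A B τbar : ℝ) (hA : 0 < A) (hB : 0 < B)
    (τ : ℝ → ℝ) (hτ : ∀ t, 0 ≤ τ t ∧ τ t ≤ τbar)
    (u : ℝ → ℝ) (hdiff : ∀ t, t0 ≤ t → DifferentiableAt ℝ u t)
    (hineq : ∀ t, t0 ≤ t → deriv u t ≤ B - A * Real.exp (u (t - τ t))) :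
    Filter.limsup (fun t => (u t : EReal)) atTop ≤
      ((Real.log (B / A) + B * τbar : ℝ) : EReal) := by
  have hlate : ∀ t, t0 + τbar ≤ t → t0 ≤ t - τ t := fun t ht => by linarith [(hτ t).2]
  have hstart : ∀ t, t0 + τbar ≤ t → t0 ≤ t := fun t ht =>
    (hlate t ht).trans (sub_le_self t (hτ t).1)
  have hslope : ∀ t, t0 ≤ t → deriv u t ≤ B := fun t ht =>
    (hineq t ht).trans (sub_le_self _ (mul_pos hA (exp_pos _)).le)
  have hlag : ∀ t, t0 + τbar ≤ t → u t - B * τbar ≤ u (t - τ t) := fun t ht => by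
    have hrise :=
      sub_le_mul_sub_of_deriv_le_of_ge hdiff hslope (hlate t ht) (sub_le_self t (hτ t).1)
    have hτB : B * τ t ≤ B * τbar := mul_le_mul_of_nonneg_left (hτ t).2 hB.le
    rw [sub_sub_cancel] at hrise
    linarith
  refine EReal.limsup_coe_le_of_eventually_le fun z hz => ?_
  have hδ : 0 < A * exp (z - B * τbar) - B := by
    have hexp : B / A < exp (z - B * τbar) :=
      (log_lt_iff_lt_exp (div_pos hB hA)).1 (by linarith)
    rw [div_lt_iff₀ hA] at hexp
    linarith
  refine eventually_le_of_deriv_le_neg hδ (fun t ht => hdiff t (hstart t ht)) fun t ht hzt => ?_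
  have hdelayed : exp (z - B * τbar) ≤ exp (u (t - τ t)) := exp_le_exp.2 (by linarith [hlag t ht])
  linarith [hineq t (hstart t ht), mul_le_mul_of_nonneg_left hdelayed hA.le]

/-- Upper estimate in logarithmic coordinates for the delayed logistic inequality
(`𝕋 = ℝ`, no impulses, inequality (3.1) of the paper). -/
theorem log_delay_upper_estimate
    (t0 A B τbar : ℝ) (hA : 0 < A) (hB : 0 < B) (hτbar : 0 ≤ τbar)
    (τ : ℝ → ℝ) (hτcont : Continuous τ) (hτ : ∀ t, 0 ≤ τ t ∧ τ t ≤ τbar)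
    (u : ℝ → ℝ) (hdiff : ∀ t, t0 ≤ t → DifferentiableAt ℝ u t)
    (hineq : ∀ t, t0 ≤ t → deriv u t ≤ B - A * Real.exp (u (t - τ t))) :
    Filter.limsup (fun t => (u t : EReal)) atTop ≤
      ((Real.log (B / A) + B * τbar : ℝ) : EReal) :=
  log_delay_upper_estimate_general t0 A B τbar hA hB τ hτ u hdiff hineq
end

section
/- Let t0 ∈ ℝ, A, B > 0, τ̄ ≥ 0, and let τ : ℝ → ℝ be continuous with 0 ≤ τ(t) ≤ τ̄ for all t. Let u : ℝ → ℝ be differentiable on [t0, ∞) and satisfy u'(t) ≥ B − A·exp(u(t − τ(t))) for all t ≥ t0. Suppose there is N > 0 with limsup_{t→∞} exp(u(t)) ≤ N. Then liminf_{t→∞} u(t) ≥ ln(B/A) − A·N·τ̄. -/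
/-!
Once `exp u ≤ M` for large `t`, the inequality gives `u' ≥ -A M`, so looking back over the delay
costs at most `A M τbar`: `u (t - τ t) ≤ u t + A M τbar`. Hence, with
`c = log (B / A) - A M τbar - δ`, at every late time where `u t ≤ c` the delayed term satisfies
`A exp (u (t - τ t)) ≤ B e^{-δ}`, so `u' ≥ B (1 - e^{-δ}) > 0`. Below `c` the function therefore
climbs at a uniform rate: it reaches `c` and never falls back below it. Letting `M ↓ N` and
`δ ↓ 0` gives the bound.
-/

open Filter Set Topology

lemma mul_sub_le_sub_of_le_deriv {u : ℝ → ℝ} {T C : ℝ}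
    (hu : ∀ t, T ≤ t → DifferentiableAt ℝ u t) (hC : ∀ t, T < t → C ≤ deriv u t)
    {s t : ℝ} (hs : T ≤ s) (hst : s ≤ t) : C * (t - s) ≤ u t - u s := by
  exact (convex_Ici T).mul_sub_le_image_sub_of_le_deriv
    (fun x hx => (hu x hx).continuousAt.continuousWithinAt)
    (fun x hx => (hu x (le_of_lt (by simpa using hx))).differentiableWithinAt)
    (fun x hx => hC x (by simpa using hx)) s hs t (hs.trans hst) hst

lemma tendsto_sub_atTop_of_le {τ : ℝ → ℝ} {τbar : ℝ} (hτ : ∀ t, τ t ≤ τbar) :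
    Tendsto (fun t => t - τ t) atTop atTop :=
  tendsto_atTop_mono (fun t => sub_le_sub_left (hτ t) t) (tendsto_atTop_add_const_right _ _ tendsto_id)

lemma eventually_le_add_mul_of_delay {u τ : ℝ → ℝ} {K τbar : ℝ} (hK : 0 ≤ K)
    (hτ : ∀ t, 0 ≤ τ t ∧ τ t ≤ τbar) (hu : ∀ᶠ t in atTop, DifferentiableAt ℝ u t)
    (hder : ∀ᶠ t in atTop, -K ≤ deriv u t) :
    ∀ᶠ t in atTop, u (t - τ t) ≤ u t + K * τbar := by
  obtain ⟨T, hT⟩ := eventually_atTop.1 (hu.and hder)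
  filter_upwards [(tendsto_sub_atTop_of_le fun t => (hτ t).2).eventually_ge_atTop T] with t ht
  have hslope := mul_sub_le_sub_of_le_deriv (fun x hx => (hT x hx).1)
    (fun x hx => (hT x hx.le).2) ht (sub_le_self t (hτ t).1)
  nlinarith [(hτ t).2]

lemma eventually_ge_of_deriv_ge_of_le {u : ℝ → ℝ} {c η : ℝ} (hη : 0 < η)
    (hu : ∀ᶠ t in atTop, DifferentiableAt ℝ u t)
    (hder : ∀ᶠ t in atTop, u t ≤ c → η ≤ deriv u t) :
    ∀ᶠ t in atTop, c ≤ u t := by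
  obtain ⟨T, hT⟩ := eventually_atTop.1 (hu.and hder)
  obtain ⟨t₁, hTt₁, hct₁⟩ : ∃ t₁, T ≤ t₁ ∧ c ≤ u t₁ := by
    by_contra! hbelow
    have hle : T ≤ T + (c - u T) / η :=
      le_add_of_nonneg_right (div_nonneg (sub_nonneg.2 (hbelow T le_rfl).le) hη.le)
    have hslope := mul_sub_le_sub_of_le_deriv (fun x hx => (hT x hx).1)
      (fun x hx => (hT x hx.le).2 (hbelow x hx.le).le) le_rfl hle
    rw [add_sub_cancel_left, mul_div_cancel₀ _ hη.ne'] at hslope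
    linarith [hbelow _ hle]
  filter_upwards [eventually_ge_atTop t₁] with t ht
  have hdiff : ∀ x ∈ Icc t₁ t, DifferentiableAt ℝ u x := fun x hx => (hT x (hTt₁.trans hx.1)).1
  exact image_le_of_deriv_right_lt_deriv_boundary' continuousOn_const
    (fun x _ => hasDerivWithinAt_const x _ c) hct₁
    (fun x hx => (hdiff x hx).continuousAt.continuousWithinAt)
    (fun x hx => (hdiff x (Ico_subset_Icc_self hx)).hasDerivAt.hasDerivWithinAt)
    (fun x hx hcx => hη.trans_le ((hT x (hTt₁.trans hx.1)).2 hcx.ge)) ⟨ht, le_rfl⟩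

lemma eventually_log_div_sub_le_of_delay {u τ : ℝ → ℝ} {A B τbar M δ : ℝ} (hA : 0 < A)
    (hB : 0 < B) (hδ : 0 < δ) (hτ : ∀ t, 0 ≤ τ t ∧ τ t ≤ τbar)
    (hdiff : ∀ᶠ t in atTop, DifferentiableAt ℝ u t)
    (hineq : ∀ᶠ t in atTop, B - A * Real.exp (u (t - τ t)) ≤ deriv u t)
    (hM : ∀ᶠ t in atTop, Real.exp (u t) ≤ M) :
    ∀ᶠ t in atTop, Real.log (B / A) - A * M * τbar - δ ≤ u t := by
  have hM₀ : 0 ≤ M := hM.exists.elim fun t ht => (Real.exp_pos _).le.trans ht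
  have hdelayM : ∀ᶠ t in atTop, Real.exp (u (t - τ t)) ≤ M :=
    (tendsto_sub_atTop_of_le fun t => (hτ t).2).eventually hM
  have hder : ∀ᶠ t in atTop, -(A * M) ≤ deriv u t := by
    filter_upwards [hineq, hdelayM] with t hineq_t hM_t
    nlinarith
  have hdelay := eventually_le_add_mul_of_delay (by positivity) hτ hdiff hder
  have hexp : A * Real.exp (Real.log (B / A) - δ) = B / Real.exp δ := by
    rw [Real.exp_sub, Real.exp_log (div_pos hB hA)]
    field_simp
  refine eventually_ge_of_deriv_ge_of_le (η := B - B / Real.exp δ)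
    (sub_pos.2 (div_lt_self hB (Real.one_lt_exp_iff.2 hδ))) hdiff ?_
  filter_upwards [hineq, hdelay] with t hineq_t hdelay_t hut
  have : A * Real.exp (u (t - τ t)) ≤ A * Real.exp (Real.log (B / A) - δ) :=
    mul_le_mul_of_nonneg_left (Real.exp_le_exp.2 (by linarith)) hA.le
  linarith

theorem log_delay_lower_estimate_general
    (t0 A B τbar : ℝ) (hA : 0 < A) (hB : 0 < B)
    (τ : ℝ → ℝ) (hτ : ∀ t, 0 ≤ τ t ∧ τ t ≤ τbar)
    (u : ℝ → ℝ) (hdiff : ∀ t, t0 ≤ t → DifferentiableAt ℝ u t)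
    (hineq : ∀ t, t0 ≤ t → B - A * Real.exp (u (t - τ t)) ≤ deriv u t)
    (N : ℝ)
    (hlimsup : Filter.limsup (fun t => (Real.exp (u t) : EReal)) atTop ≤ (N : EReal)) :
    ((Real.log (B / A) - A * N * τbar : ℝ) : EReal) ≤
      Filter.liminf (fun t => (u t : EReal)) atTop := by
  set g : ℝ → ℝ := fun ε => Real.log (B / A) - A * (N + ε) * τbar - ε
  have hg : ∀ ε > 0, ((g ε : ℝ) : EReal) ≤ Filter.liminf (fun t => (u t : EReal)) atTop := by
    intro ε hε
    have hM : ∀ᶠ t in atTop, Real.exp (u t) ≤ N + ε := by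
      have hlt : Filter.limsup (fun t => (Real.exp (u t) : EReal)) atTop < ((N + ε : ℝ) : EReal) :=
        hlimsup.trans_lt (EReal.coe_lt_coe_iff.2 (lt_add_of_pos_right N hε))
      filter_upwards [eventually_lt_of_limsup_lt hlt] with t ht
      exact_mod_cast ht.le
    refine le_liminf_of_le (by isBoundedDefault) ?_
    filter_upwards [eventually_log_div_sub_le_of_delay hA hB hε hτ (eventually_atTop.2 ⟨t0, hdiff⟩)
      (eventually_atTop.2 ⟨t0, hineq⟩) hM] with t ht
    exact EReal.coe_le_coe_iff.2 ht
  have hg_lim : Tendsto (fun ε => ((g ε : ℝ) : EReal)) (𝓝[>] 0)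
      (𝓝 ((Real.log (B / A) - A * N * τbar : ℝ) : EReal)) := by
    have : Continuous fun ε => ((g ε : ℝ) : EReal) :=
      continuous_coe_real_ereal.comp (by fun_prop)
    simpa [g] using (this.tendsto 0).mono_left nhdsWithin_le_nhds
  exact le_of_tendsto hg_lim (eventually_nhdsWithin_of_forall hg)

/-- Lower estimate in logarithmic coordinates for the delayed logistic inequality
(`𝕋 = ℝ`, no impulses). -/
theorem log_delay_lower_estimate
    (t0 A B τbar : ℝ) (hA : 0 < A) (hB : 0 < B) (hτbar : 0 ≤ τbar)
    (τ : ℝ → ℝ) (hτcont : Continuous τ) (hτ : ∀ t, 0 ≤ τ t ∧ τ t ≤ τbar)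
    (u : ℝ → ℝ) (hdiff : ∀ t, t0 ≤ t → DifferentiableAt ℝ u t)
    (hineq : ∀ t, t0 ≤ t → B - A * Real.exp (u (t - τ t)) ≤ deriv u t)
    (N : ℝ) (hN : 0 < N)
    (hlimsup : Filter.limsup (fun t => (Real.exp (u t) : EReal)) atTop ≤ (N : EReal)) :
    ((Real.log (B / A) - A * N * τbar : ℝ) : EReal) ≤
      Filter.liminf (fun t => (u t : EReal)) atTop :=
  log_delay_lower_estimate_general t0 A B τbar hA hB τ hτ u hdiff hineq N hlimsup
end

section
/- Let t0 ∈ ℤ, A > 0, 0 < B < 1, and τ̄ ∈ ℕ. Let τ : ℤ → ℕ satisfy τ(t) ≤ τ̄ for all t, and let x : ℤ → ℝ satisfy x(t+1) ≤ x(t) + B − A·exp(x(t − τ(t))) for all t ≥ t0. Then limsup_{t→∞} x(t) ≤ ln(B/A) + B·τ̄/(1 − B). -/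
open Filter Real Topology

/-!
Along the inequality `x` grows by at most `B` per step, so the delayed value `x (t - τ t)` is at
least `x t - B τbar`. Since `A e^{x t - B τbar} = B e^{x t - L}` for `L = log (B / A) + B τbar`,
the bound `e^s ≥ 1 + s` turns the inequality into the contraction
`x (t + 1) - L ≤ (1 - B) (x t - L)`, so the excess of `x` over `L` decays geometrically and
`limsup x ≤ L ≤ log (B / A) + B τbar / (1 - B)`.
-/

lemma le_add_mul_sub_of_succ_le_add {x : ℤ → ℝ} {t0 s : ℤ} {b : ℝ}
    (hx : ∀ t, t0 ≤ t → x (t + 1) ≤ x t + b) (hs : t0 ≤ s) (t : ℤ) (hst : s ≤ t) :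
    x t ≤ x s + b * (t - s) := by
  induction t, hst using Int.leInduction with
  | base => simp
  | succ t hst ih =>
    have := hx t (hs.trans hst)
    push_cast
    linarith

lemma sub_le_one_sub_mul_sub_of_le_add_sub_mul_exp {A B D u v w : ℝ} (hA : 0 < A) (hB : 0 < B)
    (hw : u - D ≤ w) (hv : v ≤ u + B - A * exp w) :
    v - (log (B / A) + D) ≤ (1 - B) * (u - (log (B / A) + D)) := by
  set L := log (B / A) + D
  have hexp : B * exp (u - L) = A * exp (u - D) := by
    rw [show u - L = (u - D) - log (B / A) by ring, exp_sub, exp_log (div_pos hB hA)]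
    field_simp
  have : B * (u - L + 1) ≤ A * exp w := calc
    B * (u - L + 1) ≤ B * exp (u - L) := mul_le_mul_of_nonneg_left (add_one_le_exp _) hB.le
    _ = A * exp (u - D) := hexp
    _ ≤ A * exp w := by gcongr
  linarith

lemma tendsto_toNat_sub_atTop (t1 : ℤ) :
    Tendsto (fun t : ℤ => (t - t1).toNat) atTop atTop :=
  tendsto_atTop_atTop.2 fun n => ⟨t1 + n, fun t ht => by omega⟩

lemma limsup_coe_le_of_sub_le_mul_sub {x : ℤ → ℝ} {L c : ℝ} {t1 : ℤ} (hc0 : 0 ≤ c) (hc1 : c < 1)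
    (hx : ∀ t, t1 ≤ t → x (t + 1) - L ≤ c * (x t - L)) :
    limsup (fun t => (x t : EReal)) atTop ≤ L := by
  set M := max (x t1 - L) 0
  have hdecay (t : ℤ) (ht : t1 ≤ t) : x t ≤ L + c ^ (t - t1).toNat * M := by
    induction t, ht using Int.leInduction with
    | base =>
      simp only [sub_self, Int.toNat_zero, pow_zero, one_mul]
      linarith [le_max_left (x t1 - L) 0]
    | succ t ht ih =>
      rw [show (t + 1 - t1).toNat = (t - t1).toNat + 1 by omega, pow_succ]
      have := mul_le_mul_of_nonneg_left (show x t - L ≤ c ^ (t - t1).toNat * M by linarith) hc0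
      linarith [hx t ht]
  have hlim : Tendsto (fun t : ℤ => L + c ^ (t - t1).toNat * M) atTop (𝓝 L) := by
    have := ((tendsto_pow_atTop_nhds_zero_of_lt_one hc0 hc1).comp
      (tendsto_toNat_sub_atTop t1)).mul_const M
    simpa using tendsto_const_nhds.add this
  calc limsup (fun t => (x t : EReal)) atTop
      ≤ limsup (fun t : ℤ => ((L + c ^ (t - t1).toNat * M : ℝ) : EReal)) atTop :=
        limsup_le_limsup <|
          eventually_atTop.2 ⟨t1, fun t ht => EReal.coe_le_coe_iff.2 (hdecay t ht)⟩
    _ = L := (EReal.tendsto_coe.2 hlim).limsup_eq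

/-- Upper estimate in logarithmic coordinates for the discrete delayed logistic
inequality (`𝕋 = ℤ`, no impulses). -/
theorem discrete_log_delay_upper_estimate
    (t0 : ℤ) (A B : ℝ) (τbar : ℕ)
    (hA : 0 < A) (hB0 : 0 < B) (hB1 : B < 1)
    (τ : ℤ → ℕ) (hτ : ∀ t, τ t ≤ τbar)
    (x : ℤ → ℝ)
    (hineq : ∀ t, t0 ≤ t →
      x (t + 1) ≤ x t + B - A * Real.exp (x (t - (τ t : ℤ)))) :
    Filter.limsup (fun t : ℤ => (x t : EReal)) atTop ≤
      ((Real.log (B / A) + B * (τbar : ℝ) / (1 - B) : ℝ) : EReal) := by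
  have hgrowth (t : ℤ) (ht : t0 ≤ t) : x (t + 1) ≤ x t + B := by
    linarith [hineq t ht, mul_pos hA (exp_pos (x (t - τ t)))]
  have hdelay (t : ℤ) (ht : t0 + τbar ≤ t) : x t - B * τbar ≤ x (t - τ t) := by
    have hτt : (τ t : ℝ) ≤ τbar := by exact_mod_cast hτ t
    have := le_add_mul_sub_of_succ_le_add hgrowth (s := t - τ t) (by linarith [hτ t]) t (by omega)
    push_cast at this
    linarith [mul_le_mul_of_nonneg_left hτt hB0.le]
  have hcontr (t : ℤ) (ht : t0 + τbar ≤ t) :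
      x (t + 1) - (log (B / A) + B * τbar) ≤ (1 - B) * (x t - (log (B / A) + B * τbar)) :=
    sub_le_one_sub_mul_sub_of_le_add_sub_mul_exp hA hB0 (hdelay t ht) (hineq t (by omega))
  calc limsup (fun t : ℤ => (x t : EReal)) atTop ≤ ((log (B / A) + B * τbar : ℝ) : EReal) :=
        limsup_coe_le_of_sub_le_mul_sub (by linarith) (by linarith) hcontr
    _ ≤ _ := EReal.coe_le_coe_iff.2 <| by
        gcongr
        exact le_div_self (by positivity) (by linarith) (by linarith)
end

section
/- Let t0 ∈ ℤ, A, B > 0, and τ̄ ∈ ℕ. Let τ : ℤ → ℕ satisfy τ(t) ≤ τ̄ for all t, and let x : ℤ → ℝ satisfy x(t+1) ≥ x(t) + B − A·exp(x(t − τ(t))) for all t ≥ t0. Suppose there is N > 0 with limsup_{t→∞} exp(x(t)) ≤ N and 1 − A·N > 0. Then liminf_{t→∞} x(t) ≥ ln(B/A) + τ̄·ln(1 − A·N). -/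
/-!
Fix `M > N` with `A * M < 1`; eventually `exp (x t) ≤ M`, so each step changes `x` by at least
`c = log (1 - A * M) ≤ 0`. If `x (t - τ t) ≤ log (B / A)` then `x (t + 1) ≥ x t`; otherwise,
since `y + B - A * exp y ≥ log (B / A)` whenever `log (B / A) ≤ y` and `exp y ≤ M`, the delayed
value gives `x (t + 1) ≥ log (B / A) + τbar * c`. So `x (t + 1) ≥ min (x t) (log (B / A) + τbar * c)`:
a level below this threshold is never left once reached, and it is reached because below it the
delayed term pushes `x` up at a uniform rate. Letting `M ↓ N` gives the estimate.
-/

open Filter Topology Real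

theorem add_sub_mul_le_of_forall_add_le_succ {u : ℤ → ℝ} {c : ℝ} {s t : ℤ} (hst : s ≤ t)
    (h : ∀ r, s ≤ r → r < t → u r + c ≤ u (r + 1)) : u s + (t - s) * c ≤ u t := by
  induction t, hst using Int.leInduction with
  | base => simp
  | succ t hst ih =>
    have h₁ := ih fun r hsr hrt => h r hsr (by omega)
    have h₂ := h t hst (by omega)
    push_cast
    linarith

theorem exists_le_of_add_le_succ {u : ℤ → ℝ} {δ : ℝ} {T : ℤ} (hδ : 0 < δ)
    (h : ∀ t, T ≤ t → u t + δ ≤ u (t + 1)) (q : ℝ) : ∃ t, T ≤ t ∧ q ≤ u t := by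
  obtain ⟨n, hn⟩ := exists_nat_ge ((q - u T) / δ)
  refine ⟨T + n, by omega, ?_⟩
  have hwalk := add_sub_mul_le_of_forall_add_le_succ (c := δ) (by omega : T ≤ T + n)
    fun r hr _ => h r hr
  rw [div_le_iff₀ hδ] at hn
  push_cast at hwalk
  rw [add_sub_cancel_left] at hwalk
  linarith

theorem forall_le_of_min_le_succ {α : Type*} [LinearOrder α] {u : ℤ → α} {q : α} {T t₁ : ℤ}
    (h : ∀ t, T ≤ t → min (u t) q ≤ u (t + 1)) (hT : T ≤ t₁) (h₁ : q ≤ u t₁) :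
    ∀ t, t₁ ≤ t → q ≤ u t := by
  intro t ht
  induction t, ht using Int.leInduction with
  | base => exact h₁
  | succ t ht ih => exact (le_min ih le_rfl).trans (h t (hT.trans ht))

theorem log_div_le_add_sub_mul_exp {A B M y : ℝ} (hA : 0 < A) (hB : 0 < B) (hAM : A * M ≤ 1)
    (hy : log (B / A) ≤ y) (hyM : exp y ≤ M) : log (B / A) ≤ y + B - A * exp y := by
  set L := log (B / A)
  have hBL : B = A * exp L := by rw [exp_log (div_pos hB hA)]; field_simp
  have hexp : exp y - exp L ≤ exp y * (y - L) := by
    have h := mul_le_mul_of_nonneg_left (add_one_le_exp (L - y)) (exp_pos y).le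
    rw [← exp_add, add_sub_cancel] at h
    linarith
  have : A * exp y - B ≤ y - L :=
    calc A * exp y - B = A * (exp y - exp L) := by rw [hBL]; ring
      _ ≤ A * (M * (y - L)) := by
        gcongr
        exact hexp.trans (mul_le_mul_of_nonneg_right hyM (sub_nonneg.2 hy))
      _ = A * M * (y - L) := by ring
      _ ≤ y - L := mul_le_of_le_one_left (sub_nonneg.2 hy) hAM
  linarith

namespace DelayLogisticIneq

variable {A B M q : ℝ} {t0 T : ℤ} {τbar : ℕ} {τ : ℤ → ℕ} {x : ℤ → ℝ}

theorem add_log_le_succ (hA : 0 ≤ A) (hB : 0 ≤ B) (hAM : A * M < 1)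
    (hineq : ∀ t, t0 ≤ t → x t + B - A * exp (x (t - τ t)) ≤ x (t + 1))
    (hbdd : ∀ t, T ≤ t → exp (x t) ≤ M) {r : ℤ} (hr : t0 ≤ r) (hrT : T ≤ r - τ r) :
    x r + log (1 - A * M) ≤ x (r + 1) := by
  have hlog := log_le_sub_one_of_pos (sub_pos.2 hAM)
  have hexp := mul_le_mul_of_nonneg_left (hbdd _ hrT) hA
  linarith [hineq r hr]

theorem min_le_succ (hA : 0 < A) (hB : 0 < B) (hAM : A * M < 1) (hτ : ∀ t, τ t ≤ τbar)
    (hineq : ∀ t, t0 ≤ t → x t + B - A * exp (x (t - τ t)) ≤ x (t + 1))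
    (hbdd : ∀ t, T ≤ t → exp (x t) ≤ M) (hT : t0 ≤ T) {t : ℤ} (ht : T + 2 * τbar ≤ t) :
    min (x t) (log (B / A) + τbar * log (1 - A * M)) ≤ x (t + 1) := by
  set s := t - (τ t : ℤ)
  have hτt := hτ t
  have hstep := hineq t (by omega)
  rcases le_or_gt (x s) (log (B / A)) with hs | hs
  · have : A * exp (x s) ≤ B :=
      calc A * exp (x s) ≤ A * (B / A) := by
            gcongr
            exact (exp_le_exp.2 hs).trans_eq (exp_log (div_pos hB hA))
        _ = B := mul_div_cancel₀ _ hA.ne'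
    exact (min_le_left _ _).trans (by linarith)
  · have hM : 0 < M := (exp_pos _).trans_le (hbdd T le_rfl)
    have hc : log (1 - A * M) ≤ 0 := log_nonpos (by linarith) (by nlinarith)
    have hwalk := add_sub_mul_le_of_forall_add_le_succ (u := x) (s := s) (t := t) (by omega)
      fun r hr _ => add_log_le_succ hA.le hB.le hAM hineq hbdd (by omega)
        (by have := hτ r; omega)
    have hts : (t : ℝ) - s = τ t := by simp only [s]; push_cast; ring
    have hdelay : (τbar : ℝ) * log (1 - A * M) ≤ τ t * log (1 - A * M) :=
      mul_le_mul_of_nonpos_right (by exact_mod_cast hτt) hc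
    have hret := log_div_le_add_sub_mul_exp hA hB hAM.le hs.le (hbdd s (by omega))
    rw [hts] at hwalk
    exact (min_le_right _ _).trans (by linarith)

theorem exists_le_of_lt_log_div (hA : 0 < A) (hB : 0 < B) (hτ : ∀ t, τ t ≤ τbar)
    (hineq : ∀ t, t0 ≤ t → x t + B - A * exp (x (t - τ t)) ≤ x (t + 1))
    (hT : t0 ≤ T) (hq : q < log (B / A)) : ∃ t, T ≤ t ∧ q ≤ x t := by
  by_contra! hlt
  have hδ : 0 < B - A * exp q := by
    have : A * exp q < A * (B / A) := by
      gcongr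
      exact (exp_lt_exp.2 hq).trans_eq (exp_log (div_pos hB hA))
    rw [mul_div_cancel₀ _ hA.ne'] at this
    linarith
  have hdrift : ∀ t, T + τbar ≤ t → x t + (B - A * exp q) ≤ x (t + 1) := by
    intro t ht
    have hs := hlt (t - τ t) (by have := hτ t; omega)
    have := mul_le_mul_of_nonneg_left (exp_le_exp.2 hs.le) hA.le
    linarith [hineq t (by omega)]
  obtain ⟨t, ht, hqt⟩ := exists_le_of_add_le_succ hδ hdrift q
  exact (hlt t (by omega)).not_ge hqt

theorem eventually_le_of_lt (hA : 0 < A) (hB : 0 < B) (hAM : A * M < 1)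
    (hτ : ∀ t, τ t ≤ τbar)
    (hineq : ∀ t, t0 ≤ t → x t + B - A * exp (x (t - τ t)) ≤ x (t + 1))
    (hbdd : ∀ᶠ t in atTop, exp (x t) ≤ M)
    (hq : q < log (B / A) + τbar * log (1 - A * M)) : ∀ᶠ t in atTop, q ≤ x t := by
  obtain ⟨T, hT⟩ := eventually_atTop.1 (hbdd.and (eventually_ge_atTop t0))
  have hM : 0 < M := (exp_pos _).trans_le (hT T le_rfl).1
  have hc : log (1 - A * M) ≤ 0 := log_nonpos (by linarith) (by nlinarith)
  have hqL : q < log (B / A) := by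
    nlinarith [mul_nonpos_of_nonneg_of_nonpos (Nat.cast_nonneg τbar) hc]
  obtain ⟨t₁, ht₁, hq₁⟩ :=
    exists_le_of_lt_log_div hA hB hτ hineq (T := T + 2 * τbar) (by linarith [(hT T le_rfl).2]) hqL
  refine eventually_atTop.2 ⟨t₁, forall_le_of_min_le_succ (fun t ht => ?_) ht₁ hq₁⟩
  exact (min_le_min_left _ hq.le).trans
    (min_le_succ hA hB hAM hτ hineq (fun t ht => (hT t ht).1) (hT T le_rfl).2 ht)

theorem le_liminf (hA : 0 < A) (hB : 0 < B) (hAM : A * M < 1) (hτ : ∀ t, τ t ≤ τbar)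
    (hineq : ∀ t, t0 ≤ t → x t + B - A * exp (x (t - τ t)) ≤ x (t + 1))
    (hbdd : ∀ᶠ t in atTop, exp (x t) ≤ M) :
    ((log (B / A) + τbar * log (1 - A * M) : ℝ) : EReal) ≤
      liminf (fun t : ℤ => (x t : EReal)) atTop :=
  EReal.ge_of_forall_gt_iff_ge.1 fun q hq => le_liminf_of_le (by isBoundedDefault) <|
    (eventually_le_of_lt hA hB hAM hτ hineq hbdd (by exact_mod_cast hq)).mono
      fun _ h => by exact_mod_cast h

end DelayLogisticIneq

theorem discrete_log_delay_lower_estimate_general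
    (t0 : ℤ) (A B : ℝ) (τbar : ℕ)
    (hA : 0 < A) (hB : 0 < B)
    (τ : ℤ → ℕ) (hτ : ∀ t, τ t ≤ τbar)
    (x : ℤ → ℝ)
    (hineq : ∀ t, t0 ≤ t →
      x t + B - A * Real.exp (x (t - (τ t : ℤ))) ≤ x (t + 1))
    (N : ℝ)
    (hlimsup : Filter.limsup (fun t : ℤ => (Real.exp (x t) : EReal)) atTop ≤ (N : EReal))
    (hAN : 0 < 1 - A * N) :
    ((Real.log (B / A) + (τbar : ℝ) * Real.log (1 - A * N) : ℝ) : EReal) ≤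
      Filter.liminf (fun t : ℤ => (x t : EReal)) atTop := by
  have hcont : ContinuousAt (fun M => 1 - A * M) N := by fun_prop
  have hbound : Tendsto (fun M => ((log (B / A) + τbar * log (1 - A * M) : ℝ) : EReal))
      (𝓝[>] N) (𝓝 ((log (B / A) + τbar * log (1 - A * N) : ℝ) : EReal)) :=
    (continuous_coe_real_ereal.tendsto _).comp <| tendsto_nhdsWithin_of_tendsto_nhds <|
      (continuousAt_const.add (continuousAt_const.mul
        (hcont.log hAN.ne'))).tendsto
  have hAM : ∀ᶠ M in 𝓝[>] N, 0 < 1 - A * M :=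
    eventually_nhdsWithin_of_eventually_nhds (hcont.eventually (lt_mem_nhds hAN))
  refine le_of_tendsto hbound ?_
  filter_upwards [self_mem_nhdsWithin, hAM] with M hNM hAM
  refine DelayLogisticIneq.le_liminf hA hB (by linarith) hτ hineq ?_
  filter_upwards [eventually_lt_of_limsup_lt (hlimsup.trans_lt (EReal.coe_lt_coe_iff.2 hNM))]
    with t ht
  exact_mod_cast ht.le

/-- Lower estimate in logarithmic coordinates for the discrete delayed logistic
inequality (`𝕋 = ℤ`, no impulses). -/
theorem discrete_log_delay_lower_estimate
    (t0 : ℤ) (A B : ℝ) (τbar : ℕ)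
    (hA : 0 < A) (hB : 0 < B)
    (τ : ℤ → ℕ) (hτ : ∀ t, τ t ≤ τbar)
    (x : ℤ → ℝ)
    (hineq : ∀ t, t0 ≤ t →
      x t + B - A * Real.exp (x (t - (τ t : ℤ))) ≤ x (t + 1))
    (N : ℝ) (hN : 0 < N)
    (hlimsup : Filter.limsup (fun t : ℤ => (Real.exp (x t) : EReal)) atTop ≤ (N : EReal))
    (hAN : 0 < 1 - A * N) :
    ((Real.log (B / A) + (τbar : ℝ) * Real.log (1 - A * N) : ℝ) : EReal) ≤
      Filter.liminf (fun t : ℤ => (x t : EReal)) atTop :=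
  discrete_log_delay_lower_estimate_general t0 A B τbar hA hB τ hτ x hineq N hlimsup hAN
end

section
/- Fix n, m ≥ 1 and t0 ∈ ℝ. For i, l ∈ {1,…,n} and j, h ∈ {1,…,m}, let b_i, a_{il}, c_{ih}, r_j, d_{jl}, e_{jh} : ℝ → ℝ be nonnegative bounded continuous functions, and let τ_{il}, δ_{ih}, ξ_{jl}, η_{jh} : ℝ → ℝ be nonnegative bounded continuous delay functions. Write f^U = sup_{t∈ℝ} f(t), f^L = inf_{t∈ℝ} f(t), τ⁺ = max_{i,l} sup τ_{il}, and η⁺ = max_{j,h} sup η_{jh}. Assume b_i^L > 0, a_{ii}^L > 0 and e_{jj}^L > 0 for all i, j. Define x_i^∨ = ln(b_i^U/a_{ii}^L) + b_i^U·τ⁺; D_j = Σ_{l=1}^n d_{jl}^U·e^{x_l^∨} and y_j^∨ = ln(D_j/e_{jj}^L) + D_j·η⁺ (assume D_j > 0); P_i = b_i^L − Σ_{l≠i} a_{il}^U·e^{x_l^∨} − Σ_{h=1}^m c_{ih}^U·e^{y_h^∨} and x_i^∧ = ln(P_i/a_{ii}^U) − a_{ii}^U·e^{x_i^∨}·τ⁺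 (assume P_i > 0); Q_j = Σ_{l=1}^n d_{jl}^L·e^{x_l^∧} − r_j^U − Σ_{h≠j} e_{jh}^U·e^{y_h^∨} and y_j^∧ = ln(Q_j/e_{jj}^U) − e_{jj}^U·e^{y_j^∨}·η⁺ (assume Q_j > 0). Let x_1,…,x_n, y_1,…,y_m : ℝ → ℝ be differentiable on [t0, ∞) and satisfy, for all t ≥ t0, x_i'(t) = b_i(t) − Σ_{l=1}^n a_{il}(t)·exp(x_l(t − τ_{il}(t))) − Σ_{h=1}^m c_{ih}(t)·exp(y_h(t − δ_{ih}(t))) and y_j'(t) = −r_j(t) + Σ_{l=1}^n d_{jl}(t)·exp(x_l(t − ξ_{jl}(t))) − Σ_{h=1}^m e_{jh}(t)·exp(y_h(t − η_{jh}(t))). Then for every i and j: x_i^∧ ≤ liminf_{t→∞} x_i(t) ≤ limsup_{t→∞} x_i(t) ≤ x_i^∨ and y_j^∧ ≤ liminf_{t→∞} y_j(t) ≤ limsup_{t→∞} y_j(t) ≤ y_j^∨. In particular the system is permanent. -/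
/-!
Every equation of the system is a delayed logistic inequality `g' ≤ A - K exp (g (t - σ t))`
(resp. `P - K exp (g (t - σ t)) ≤ g'`) with `0 ≤ σ ≤ T`. In the upper case `g' ≤ A`, so
`g (t - σ t) ≥ g t - A T`; hence above the level `log (A / K) + A T + ε` the function decreases
at a uniform rate and is eventually trapped below it. The lower case is symmetric, using
`g' ≥ -K exp U` once `g (t - σ t) ≤ U` is known. The four bounds are obtained in the order
`x^∨, y^∨, x^∧, y^∧`, each feeding the previous ones, perturbed by `ε`, into the coefficients;
then `ε → 0`.
-/

open Filter Topology Set Real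

section Calculus

variable {g : ℝ → ℝ} {T : ℝ}

theorem image_sub_le_mul_sub_of_deriv_le_Ici {B : ℝ} (hg : ∀ t ≥ T, DifferentiableAt ℝ g t)
    (hB : ∀ t ≥ T, deriv g t ≤ B) {s t : ℝ} (hs : T ≤ s) (hst : s ≤ t) :
    g t - g s ≤ B * (t - s) :=
  (convex_Ici T).image_sub_le_mul_sub_of_deriv_le
    (fun u hu => (hg u hu).continuousAt.continuousWithinAt)
    (fun u hu => (hg u (interior_subset hu)).differentiableWithinAt)
    (fun u hu => hB u (interior_subset hu)) s hs t (hs.trans hst) hst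

theorem mul_sub_le_image_sub_of_le_deriv_Ici {B : ℝ} (hg : ∀ t ≥ T, DifferentiableAt ℝ g t)
    (hB : ∀ t ≥ T, B ≤ deriv g t) {s t : ℝ} (hs : T ≤ s) (hst : s ≤ t) :
    B * (t - s) ≤ g t - g s :=
  (convex_Ici T).mul_sub_le_image_sub_of_le_deriv
    (fun u hu => (hg u hu).continuousAt.continuousWithinAt)
    (fun u hu => (hg u (interior_subset hu)).differentiableWithinAt)
    (fun u hu => hB u (interior_subset hu)) s hs t (hs.trans hst) hst

theorem eventually_le_of_deriv_le_neg_s10 {M c : ℝ} (hc : 0 < c)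
    (hg : ∀ t ≥ T, DifferentiableAt ℝ g t) (hg' : ∀ t ≥ T, M ≤ g t → deriv g t ≤ -c) :
    ∀ᶠ t in atTop, g t ≤ M := by
  -- If `g` stayed above `M`, it would decrease at rate `c` and be below `M` at `T + (g T - M) / c`.
  obtain ⟨t₁, ht₁, hgt₁⟩ : ∃ t₁ ≥ T, g t₁ ≤ M := by
    by_contra! hgt
    have hTt : T ≤ T + (g T - M) / c :=
      le_add_of_nonneg_right (div_nonneg (sub_nonneg.2 (hgt T le_rfl).le) hc.le)
    have hdecay := image_sub_le_mul_sub_of_deriv_le_Ici hg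
      (fun s hs => hg' s hs (hgt s hs).le) le_rfl hTt
    have hdrop : -c * (T + (g T - M) / c - T) = -(g T - M) := by field_simp; ring
    linarith [hgt _ hTt]
  filter_upwards [eventually_ge_atTop t₁] with t ht
  refine image_le_of_deriv_right_lt_deriv_boundary' (f' := deriv g) (B := fun _ => M)
    (B' := fun _ => 0) (a := t₁) (b := t) ?_ ?_ hgt₁ continuousOn_const
    (fun _ _ => hasDerivWithinAt_const _ _ _) ?_ ⟨ht, le_rfl⟩
  · exact fun u hu => (hg u (ht₁.trans hu.1)).continuousAt.continuousWithinAt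
  · exact fun u hu => (hg u (ht₁.trans hu.1)).hasDerivAt.hasDerivWithinAt
  · exact fun u hu hgu => (hg' u (ht₁.trans hu.1) hgu.ge).trans_lt (neg_lt_zero.2 hc)

theorem eventually_ge_of_pos_le_deriv {M c : ℝ} (hc : 0 < c)
    (hg : ∀ t ≥ T, DifferentiableAt ℝ g t) (hg' : ∀ t ≥ T, g t ≤ M → c ≤ deriv g t) :
    ∀ᶠ t in atTop, M ≤ g t := by
  have := eventually_le_of_deriv_le_neg_s10 (g := fun t => -g t) (M := -M) hc
    (fun t ht => (hg t ht).neg) fun t ht hgt => by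
      rw [deriv.fun_neg, neg_le_neg_iff]
      exact hg' t ht (neg_le_neg_iff.1 hgt)
  filter_upwards [this] with t ht
  exact neg_le_neg_iff.1 ht

end Calculus

/-- `limsup_{t → ∞} g t ≤ v`, in `ε`-form. -/
def UltimatelyLE (g : ℝ → ℝ) (v : ℝ) : Prop := ∀ ε > 0, ∀ᶠ t in atTop, g t ≤ v + ε

/-- `v ≤ liminf_{t → ∞} g t`, in `ε`-form. -/
def UltimatelyGE (g : ℝ → ℝ) (v : ℝ) : Prop := ∀ ε > 0, ∀ᶠ t in atTop, v - ε ≤ g t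

namespace UltimatelyLE

variable {g : ℝ → ℝ} {v : ℝ}

theorem comp_tendsto {φ : ℝ → ℝ} (h : UltimatelyLE g v) (hφ : Tendsto φ atTop atTop) :
    UltimatelyLE (g ∘ φ) v :=
  fun ε hε => hφ.eventually (h ε hε)

theorem of_tendsto {α : Type*} {l : Filter α} [l.NeBot] {V : α → ℝ} (hV : Tendsto V l (𝓝 v))
    (h : ∀ᶠ s in l, UltimatelyLE g (V s)) : UltimatelyLE g v := by
  intro ε hε
  obtain ⟨s, hs, hVs⟩ :=
    (h.and (hV.eventually (gt_mem_nhds (show v < v + ε / 2 by linarith)))).exists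
  filter_upwards [hs (ε / 2) (half_pos hε)] with t ht
  linarith

theorem limsup_le (h : UltimatelyLE g v) : limsup (fun t => (g t : EReal)) atTop ≤ v := by
  refine le_of_forall_gt_imp_ge_of_dense fun w hw => ?_
  obtain ⟨z, hvz, hzw⟩ := EReal.lt_iff_exists_real_btwn.1 hw
  refine (limsup_le_of_le (by isBoundedDefault) ?_).trans hzw.le
  filter_upwards [h (z - v) (sub_pos.2 (EReal.coe_lt_coe_iff.1 hvz))] with t ht
  exact EReal.coe_le_coe_iff.2 (by linarith)

end UltimatelyLE

namespace UltimatelyGE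

variable {g : ℝ → ℝ} {v : ℝ}

theorem comp_tendsto {φ : ℝ → ℝ} (h : UltimatelyGE g v) (hφ : Tendsto φ atTop atTop) :
    UltimatelyGE (g ∘ φ) v :=
  fun ε hε => hφ.eventually (h ε hε)

theorem of_tendsto {α : Type*} {l : Filter α} [l.NeBot] {V : α → ℝ} (hV : Tendsto V l (𝓝 v))
    (h : ∀ᶠ s in l, UltimatelyGE g (V s)) : UltimatelyGE g v := by
  intro ε hε
  obtain ⟨s, hs, hVs⟩ :=
    (h.and (hV.eventually (lt_mem_nhds (show v - ε / 2 < v by linarith)))).exists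
  filter_upwards [hs (ε / 2) (half_pos hε)] with t ht
  linarith

theorem le_liminf (h : UltimatelyGE g v) : (v : EReal) ≤ liminf (fun t => (g t : EReal)) atTop := by
  refine le_of_forall_lt_imp_le_of_dense fun w hw => ?_
  obtain ⟨z, hwz, hzv⟩ := EReal.lt_iff_exists_real_btwn.1 hw
  refine hwz.le.trans (le_liminf_of_le (by isBoundedDefault) ?_)
  filter_upwards [h (v - z) (sub_pos.2 (EReal.coe_lt_coe_iff.1 hzv))] with t ht
  exact EReal.coe_le_coe_iff.2 (by linarith)

end UltimatelyGE

theorem tendsto_sub_atTop_of_bddAbove {σ : ℝ → ℝ} (hσ : BddAbove (range σ)) :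
    Tendsto (fun t => t - σ t) atTop atTop := by
  obtain ⟨S, hS⟩ := hσ
  exact tendsto_atTop_mono (fun t => by linarith [hS (mem_range_self t)])
    (tendsto_atTop_add_const_right _ (-S) tendsto_id : Tendsto (fun t : ℝ => t + -S) _ _)

section DelayedLogistic

variable {g σ : ℝ → ℝ} {K T : ℝ}

theorem ultimatelyLE_of_deriv_le_sub_mul_exp_delay {A : ℝ} (hA : 0 < A) (hK : 0 < K)
    (hσ : ∀ t, 0 ≤ σ t ∧ σ t ≤ T) (hg : ∀ᶠ t in atTop, DifferentiableAt ℝ g t)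
    (hg' : ∀ᶠ t in atTop, deriv g t ≤ A - K * exp (g (t - σ t))) :
    UltimatelyLE g (log (A / K) + A * T) := by
  intro ε hε
  obtain ⟨T₁, hT₁⟩ := eventually_atTop.1 (hg.and hg')
  have hgA : ∀ t ≥ T₁, deriv g t ≤ A := fun t ht =>
    (hT₁ t ht).2.trans (by nlinarith [exp_pos (g (t - σ t))])
  refine eventually_le_of_deriv_le_neg_s10 (T := T₁ + T) (mul_pos hA (sub_pos.2 (one_lt_exp_iff.2 hε)))
    (fun t ht => (hT₁ t (by linarith [hσ t])).1) fun t ht hgt => ?_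
  obtain ⟨hσ0, hσT⟩ := hσ t
  have hdelay : g t - g (t - σ t) ≤ A * T := calc
    _ ≤ A * (t - (t - σ t)) := image_sub_le_mul_sub_of_deriv_le_Ici (fun s hs => (hT₁ s hs).1)
        hgA (by linarith) (by linarith)
    _ ≤ A * T := by gcongr; linarith
  have hexp : A * exp ε ≤ K * exp (g (t - σ t)) := calc
    A * exp ε = K * exp (log (A / K) + ε) := by
      rw [exp_add, exp_log (div_pos hA hK)]; field_simp
    _ ≤ K * exp (g (t - σ t)) := by gcongr; linarith
  linarith [(hT₁ t (by linarith)).2]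

theorem ultimatelyGE_of_sub_mul_exp_delay_le_deriv {P U : ℝ} (hP : 0 < P) (hK : 0 < K)
    (hσ : ∀ t, 0 ≤ σ t ∧ σ t ≤ T) (hg : ∀ᶠ t in atTop, DifferentiableAt ℝ g t)
    (hU : ∀ᶠ t in atTop, g (t - σ t) ≤ U)
    (hg' : ∀ᶠ t in atTop, P - K * exp (g (t - σ t)) ≤ deriv g t) :
    UltimatelyGE g (log (P / K) - K * exp U * T) := by
  intro ε hε
  obtain ⟨T₁, hT₁⟩ := eventually_atTop.1 (hg.and (hU.and hg'))
  have hgB : ∀ t ≥ T₁, -(K * exp U) ≤ deriv g t := fun t ht => by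
    obtain ⟨-, hUt, hg't⟩ := hT₁ t ht
    nlinarith [exp_le_exp.2 hUt]
  refine eventually_ge_of_pos_le_deriv (T := T₁ + T)
    (mul_pos hP (sub_pos.2 (exp_lt_one_iff.2 (neg_lt_zero.2 hε))))
    (fun t ht => (hT₁ t (by linarith [hσ t])).1) fun t ht hgt => ?_
  obtain ⟨hσ0, hσT⟩ := hσ t
  have hdelay : g (t - σ t) - g t ≤ K * exp U * T := by
    have := mul_sub_le_image_sub_of_le_deriv_Ici (fun s hs => (hT₁ s hs).1) hgB
      (show T₁ ≤ t - σ t by linarith) (show t - σ t ≤ t by linarith)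
    nlinarith [mul_le_mul_of_nonneg_left hσT (mul_pos hK (exp_pos U)).le]
  have hexp : K * exp (g (t - σ t)) ≤ P * exp (-ε) := calc
    K * exp (g (t - σ t)) ≤ K * exp (log (P / K) + -ε) := by gcongr; linarith
    _ = P * exp (-ε) := by rw [exp_add, exp_log (div_pos hP hK)]; field_simp
  linarith [(hT₁ t (by linarith)).2.2]

end DelayedLogistic

section ExpSums

variable {ι : Type*} (s : Finset ι) {α u : ι → ℝ} {ε : ℝ}

theorem sum_mul_exp_le_exp_mul_sum {αU uU : ι → ℝ} (hα : ∀ i ∈ s, 0 ≤ α i)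
    (hαU : ∀ i ∈ s, α i ≤ αU i) (hu : ∀ i ∈ s, u i ≤ uU i + ε) :
    ∑ i ∈ s, α i * exp (u i) ≤ exp ε * ∑ i ∈ s, αU i * exp (uU i) := by
  rw [Finset.mul_sum]
  refine Finset.sum_le_sum fun i hi => ?_
  calc α i * exp (u i) ≤ αU i * exp (uU i + ε) := by
        have := (hα i hi).trans (hαU i hi)
        gcongr
        exacts [hαU i hi, hu i hi]
    _ = exp ε * (αU i * exp (uU i)) := by rw [exp_add]; ring

theorem exp_neg_mul_sum_le_sum_mul_exp {αL uL : ι → ℝ} (hαL : ∀ i ∈ s, 0 ≤ αL i)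
    (hα : ∀ i ∈ s, αL i ≤ α i) (hu : ∀ i ∈ s, uL i - ε ≤ u i) :
    exp (-ε) * ∑ i ∈ s, αL i * exp (uL i) ≤ ∑ i ∈ s, α i * exp (u i) := by
  rw [Finset.mul_sum]
  refine Finset.sum_le_sum fun i hi => ?_
  calc exp (-ε) * (αL i * exp (uL i)) = αL i * exp (uL i - ε) := by
        rw [sub_eq_add_neg, exp_add]; ring
    _ ≤ α i * exp (u i) := by
        have := (hαL i hi).trans (hα i hi)
        gcongr
        exacts [hα i hi, hu i hi]

end ExpSums

section LotkaVolterra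

variable {n m : ℕ} {t0 τp ηp : ℝ} {b : Fin n → ℝ → ℝ} {a : Fin n → Fin n → ℝ → ℝ}
  {c : Fin n → Fin m → ℝ → ℝ} {r : Fin m → ℝ → ℝ} {d : Fin m → Fin n → ℝ → ℝ}
  {e : Fin m → Fin m → ℝ → ℝ} {τ : Fin n → Fin n → ℝ → ℝ} {δ : Fin n → Fin m → ℝ → ℝ}
  {ξ : Fin m → Fin n → ℝ → ℝ} {η : Fin m → Fin m → ℝ → ℝ}
  {bU bL xV P xW : Fin n → ℝ} {aU aL : Fin n → Fin n → ℝ} {cU : Fin n → Fin m → ℝ}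
  {rU D yV Q yW : Fin m → ℝ} {dU dL : Fin m → Fin n → ℝ} {eU eL : Fin m → Fin m → ℝ}
  {x : Fin n → ℝ → ℝ} {y : Fin m → ℝ → ℝ}

theorem prey_ultimatelyLE (i : Fin n) (hann : ∀ l t, 0 ≤ a i l t) (hcnn : ∀ h t, 0 ≤ c i h t)
    (hbU : bU i ∈ upperBounds (range (b i))) (hbUpos : 0 < bU i)
    (haL : aL i i ∈ lowerBounds (range (a i i))) (haLpos : 0 < aL i i)
    (hτnn : ∀ t, 0 ≤ τ i i t) (hτ : ∀ t, τ i i t ≤ τp)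
    (hxV : xV i = log (bU i / aL i i) + bU i * τp)
    (hxdiff : ∀ t ≥ t0, DifferentiableAt ℝ (x i) t)
    (hxeq : ∀ t ≥ t0, deriv (x i) t =
      b i t - (∑ l, a i l t * exp (x l (t - τ i l t))) - ∑ h, c i h t * exp (y h (t - δ i h t))) :
    UltimatelyLE (x i) (xV i) := by
  rw [hxV]
  refine ultimatelyLE_of_deriv_le_sub_mul_exp_delay hbUpos haLpos (fun t => ⟨hτnn t, hτ t⟩)
    (eventually_atTop.2 ⟨t0, hxdiff⟩) (eventually_atTop.2 ⟨t0, fun t ht => ?_⟩)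
  have hself : aL i i * exp (x i (t - τ i i t)) ≤ ∑ l, a i l t * exp (x l (t - τ i l t)) :=
    (mul_le_mul_of_nonneg_right (haL (mem_range_self t)) (exp_pos _).le).trans
      (Finset.single_le_sum (f := fun l => a i l t * exp (x l (t - τ i l t)))
        (fun l _ => mul_nonneg (hann l t) (exp_pos _).le) (Finset.mem_univ i))
  have hpred : 0 ≤ ∑ h, c i h t * exp (y h (t - δ i h t)) :=
    Finset.sum_nonneg fun h _ => mul_nonneg (hcnn h t) (exp_pos _).le
  linarith [hxeq t ht, hbU (mem_range_self t)]

theorem predator_ultimatelyLE (j : Fin m) (hxU : ∀ l, UltimatelyLE (x l) (xV l))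
    (hξ : ∀ l, BddAbove (range (ξ j l))) (hrnn : ∀ t, 0 ≤ r j t) (hdnn : ∀ l t, 0 ≤ d j l t)
    (hdU : ∀ l, dU j l ∈ upperBounds (range (d j l))) (henn : ∀ h t, 0 ≤ e j h t)
    (heL : eL j j ∈ lowerBounds (range (e j j))) (heLpos : 0 < eL j j)
    (hηnn : ∀ t, 0 ≤ η j j t) (hη : ∀ t, η j j t ≤ ηp)
    (hD : D j = ∑ l, dU j l * exp (xV l)) (hDpos : 0 < D j)
    (hyV : yV j = log (D j / eL j j) + D j * ηp)
    (hydiff : ∀ t ≥ t0, DifferentiableAt ℝ (y j) t)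
    (hyeq : ∀ t ≥ t0, deriv (y j) t =
      -(r j t) + (∑ l, d j l t * exp (x l (t - ξ j l t)))
        - ∑ h, e j h t * exp (y h (t - η j h t))) :
    UltimatelyLE (y j) (yV j) := by
  have hV : ContinuousAt (fun s => log (D j * exp s / eL j j) + D j * exp s * ηp) 0 := by
    fun_prop (disch := positivity)
  refine UltimatelyLE.of_tendsto (l := 𝓝[>] (0 : ℝ))
    (by simpa [hyV] using hV.tendsto.mono_left nhdsWithin_le_nhds)
    (eventually_nhdsWithin_of_forall fun s (hs : (0 : ℝ) < s) => ?_)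
  refine ultimatelyLE_of_deriv_le_sub_mul_exp_delay (by positivity) heLpos
    (fun t => ⟨hηnn t, hη t⟩) (eventually_atTop.2 ⟨t0, hydiff⟩) ?_
  have hx : ∀ᶠ t in atTop, ∀ l, x l (t - ξ j l t) ≤ xV l + s := eventually_all.2 fun l =>
    (hxU l).comp_tendsto (tendsto_sub_atTop_of_bddAbove (hξ l)) s hs
  filter_upwards [hx, eventually_ge_atTop t0] with t hx ht
  have hprey := sum_mul_exp_le_exp_mul_sum Finset.univ (fun l _ => hdnn l t)
    (fun l _ => hdU l (mem_range_self t)) fun l _ => hx l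
  have hself : eL j j * exp (y j (t - η j j t)) ≤ ∑ h, e j h t * exp (y h (t - η j h t)) :=
    (mul_le_mul_of_nonneg_right (heL (mem_range_self t)) (exp_pos _).le).trans
      (Finset.single_le_sum (f := fun h => e j h t * exp (y h (t - η j h t)))
        (fun h _ => mul_nonneg (henn h t) (exp_pos _).le) (Finset.mem_univ j))
  rw [← hD] at hprey
  linarith [hyeq t ht, hrnn t]

theorem prey_ultimatelyGE (i : Fin n) (hxU : ∀ l, UltimatelyLE (x l) (xV l))
    (hyU : ∀ h, UltimatelyLE (y h) (yV h)) (hδ : ∀ h, BddAbove (range (δ i h)))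
    (hbL : bL i ∈ lowerBounds (range (b i))) (hann : ∀ l t, 0 ≤ a i l t)
    (haU : ∀ l, aU i l ∈ upperBounds (range (a i l))) (haUpos : 0 < aU i i)
    (hcnn : ∀ h t, 0 ≤ c i h t) (hcU : ∀ h, cU i h ∈ upperBounds (range (c i h)))
    (hτnn : ∀ t, 0 ≤ τ i i t) (hτ : ∀ l t, τ i l t ≤ τp)
    (hP : P i = bL i - (∑ l ∈ Finset.univ.filter (fun l => l ≠ i), aU i l * exp (xV l))
      - ∑ h, cU i h * exp (yV h))
    (hPpos : 0 < P i)
    (hxW : xW i = log (P i / aU i i) - aU i i * exp (xV i) * τp)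
    (hxdiff : ∀ t ≥ t0, DifferentiableAt ℝ (x i) t)
    (hxeq : ∀ t ≥ t0, deriv (x i) t =
      b i t - (∑ l, a i l t * exp (x l (t - τ i l t))) - ∑ h, c i h t * exp (y h (t - δ i h t))) :
    UltimatelyGE (x i) (xW i) := by
  set others := Finset.univ.filter (fun l => l ≠ i)
  -- `P i` with the bounds `xV`, `yV` on the other species relaxed to `xV + s`, `yV + s`.
  set Pε : ℝ → ℝ := fun s => bL i - exp s * (∑ l ∈ others, aU i l * exp (xV l))
    - exp s * ∑ h, cU i h * exp (yV h)
  have hPε : ContinuousAt Pε 0 := by fun_prop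
  have hPε0 : Pε 0 = P i := by simp [Pε, hP]
  have hW : ContinuousAt (fun s => log (Pε s / aU i i) - aU i i * exp (xV i + s) * τp) 0 :=
    (hPε.div_const _).log (by rw [hPε0]; positivity) |>.sub (by fun_prop)
  refine UltimatelyGE.of_tendsto (l := 𝓝[>] (0 : ℝ))
    (by simpa [hxW, hPε0] using hW.tendsto.mono_left nhdsWithin_le_nhds) ?_
  filter_upwards [self_mem_nhdsWithin, (hPε.eventually (lt_mem_nhds (hPε0 ▸ hPpos))).filter_mono
    nhdsWithin_le_nhds] with s (hs : 0 < s) hPs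
  have hx : ∀ᶠ t in atTop, ∀ l, x l (t - τ i l t) ≤ xV l + s := eventually_all.2 fun l =>
    (hxU l).comp_tendsto (tendsto_sub_atTop_of_bddAbove ⟨τp, forall_mem_range.2 (hτ l)⟩) s hs
  have hy : ∀ᶠ t in atTop, ∀ h, y h (t - δ i h t) ≤ yV h + s := eventually_all.2 fun h =>
    (hyU h).comp_tendsto (tendsto_sub_atTop_of_bddAbove (hδ h)) s hs
  refine ultimatelyGE_of_sub_mul_exp_delay_le_deriv hPs haUpos (fun t => ⟨hτnn t, hτ i t⟩)
    (eventually_atTop.2 ⟨t0, hxdiff⟩) (hx.mono fun t hx => hx i) ?_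
  filter_upwards [hx, hy, eventually_ge_atTop t0] with t hx hy ht
  have hcomp := sum_mul_exp_le_exp_mul_sum others (fun l _ => hann l t)
    (fun l _ => haU l (mem_range_self t)) fun l _ => hx l
  have hpred := sum_mul_exp_le_exp_mul_sum Finset.univ (fun h _ => hcnn h t)
    (fun h _ => hcU h (mem_range_self t)) fun h _ => hy h
  have hself : a i i t * exp (x i (t - τ i i t)) ≤ aU i i * exp (x i (t - τ i i t)) :=
    mul_le_mul_of_nonneg_right (haU i (mem_range_self t)) (exp_pos _).le
  rw [hxeq t ht, ← Finset.add_sum_erase _ _ (Finset.mem_univ i), ← Finset.filter_ne']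
  linarith [hbL (mem_range_self t)]

theorem predator_ultimatelyGE (j : Fin m) (hxL : ∀ l, UltimatelyGE (x l) (xW l))
    (hyU : ∀ h, UltimatelyLE (y h) (yV h)) (hξ : ∀ l, BddAbove (range (ξ j l)))
    (hrU : rU j ∈ upperBounds (range (r j))) (hdnn : ∀ l t, 0 ≤ d j l t)
    (hdL : ∀ l, IsGLB (range (d j l)) (dL j l)) (henn : ∀ h t, 0 ≤ e j h t)
    (heU : ∀ h, eU j h ∈ upperBounds (range (e j h))) (heUpos : 0 < eU j j)
    (hηnn : ∀ t, 0 ≤ η j j t) (hη : ∀ h t, η j h t ≤ ηp)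
    (hQ : Q j = (∑ l, dL j l * exp (xW l)) - rU j
      - ∑ h ∈ Finset.univ.filter (fun h => h ≠ j), eU j h * exp (yV h))
    (hQpos : 0 < Q j)
    (hyW : yW j = log (Q j / eU j j) - eU j j * exp (yV j) * ηp)
    (hydiff : ∀ t ≥ t0, DifferentiableAt ℝ (y j) t)
    (hyeq : ∀ t ≥ t0, deriv (y j) t =
      -(r j t) + (∑ l, d j l t * exp (x l (t - ξ j l t)))
        - ∑ h, e j h t * exp (y h (t - η j h t))) :
    UltimatelyGE (y j) (yW j) := by
  set others := Finset.univ.filter (fun h => h ≠ j)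
  -- `Q j` with the bounds `xW`, `yV` on the other species relaxed to `xW - s`, `yV + s`.
  set Qε : ℝ → ℝ := fun s => exp (-s) * (∑ l, dL j l * exp (xW l)) - rU j
    - exp s * ∑ h ∈ others, eU j h * exp (yV h)
  have hQε : ContinuousAt Qε 0 := by fun_prop
  have hQε0 : Qε 0 = Q j := by simp [Qε, hQ]
  have hW : ContinuousAt (fun s => log (Qε s / eU j j) - eU j j * exp (yV j + s) * ηp) 0 :=
    (hQε.div_const _).log (by rw [hQε0]; positivity) |>.sub (by fun_prop)
  refine UltimatelyGE.of_tendsto (l := 𝓝[>] (0 : ℝ))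
    (by simpa [hyW, hQε0] using hW.tendsto.mono_left nhdsWithin_le_nhds) ?_
  filter_upwards [self_mem_nhdsWithin, (hQε.eventually (lt_mem_nhds (hQε0 ▸ hQpos))).filter_mono
    nhdsWithin_le_nhds] with s (hs : 0 < s) hQs
  have hx : ∀ᶠ t in atTop, ∀ l, xW l - s ≤ x l (t - ξ j l t) := eventually_all.2 fun l =>
    (hxL l).comp_tendsto (tendsto_sub_atTop_of_bddAbove (hξ l)) s hs
  have hy : ∀ᶠ t in atTop, ∀ h, y h (t - η j h t) ≤ yV h + s := eventually_all.2 fun h =>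
    (hyU h).comp_tendsto (tendsto_sub_atTop_of_bddAbove ⟨ηp, forall_mem_range.2 (hη h)⟩) s hs
  refine ultimatelyGE_of_sub_mul_exp_delay_le_deriv hQs heUpos (fun t => ⟨hηnn t, hη j t⟩)
    (eventually_atTop.2 ⟨t0, hydiff⟩) (hy.mono fun t hy => hy j) ?_
  filter_upwards [hx, hy, eventually_ge_atTop t0] with t hx hy ht
  have hprey := exp_neg_mul_sum_le_sum_mul_exp Finset.univ
    (fun l _ => (hdL l).2 (forall_mem_range.2 (hdnn l))) (fun l _ => (hdL l).1 (mem_range_self t))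
    fun l _ => hx l
  have hcomp := sum_mul_exp_le_exp_mul_sum others (fun h _ => henn h t)
    (fun h _ => heU h (mem_range_self t)) fun h _ => hy h
  have hself : e j j t * exp (y j (t - η j j t)) ≤ eU j j * exp (y j (t - η j j t)) :=
    mul_le_mul_of_nonneg_right (heU j (mem_range_self t)) (exp_pos _).le
  rw [hyeq t ht, ← Finset.add_sum_erase _ _ (Finset.mem_univ j), ← Finset.filter_ne']
  linarith [hrU (mem_range_self t)]

end LotkaVolterra

theorem lotka_volterra_permanence_real_general
    (n m : ℕ) (t0 : ℝ)
    (b : Fin n → ℝ → ℝ) (a : Fin n → Fin n → ℝ → ℝ) (c : Fin n → Fin m → ℝ → ℝ)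
    (r : Fin m → ℝ → ℝ) (d : Fin m → Fin n → ℝ → ℝ) (e : Fin m → Fin m → ℝ → ℝ)
    (τ : Fin n → Fin n → ℝ → ℝ) (δ : Fin n → Fin m → ℝ → ℝ)
    (ξ : Fin m → Fin n → ℝ → ℝ) (η : Fin m → Fin m → ℝ → ℝ)
    -- nonnegativity of the coefficients and delays
    (hann : ∀ i l t, 0 ≤ a i l t) (hcnn : ∀ i h t, 0 ≤ c i h t) (hrnn : ∀ j t, 0 ≤ r j t)
    (hdnn : ∀ j l t, 0 ≤ d j l t) (henn : ∀ j h t, 0 ≤ e j h t)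
    (hτnn : ∀ i l t, 0 ≤ τ i l t) (hηnn : ∀ j h t, 0 ≤ η j h t)
    -- suprema and infima of the coefficients (in particular boundedness)
    (bU bL : Fin n → ℝ)
    (hbU : ∀ i, IsLUB (Set.range (b i)) (bU i))
    (hbL : ∀ i, IsGLB (Set.range (b i)) (bL i))
    (aU aL : Fin n → Fin n → ℝ)
    (haU : ∀ i l, IsLUB (Set.range (a i l)) (aU i l))
    (haL : ∀ i l, IsGLB (Set.range (a i l)) (aL i l))
    (cU : Fin n → Fin m → ℝ)
    (hcU : ∀ i h, IsLUB (Set.range (c i h)) (cU i h))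
    (rU : Fin m → ℝ)
    (hrU : ∀ j, IsLUB (Set.range (r j)) (rU j))
    (dU dL : Fin m → Fin n → ℝ)
    (hdU : ∀ j l, IsLUB (Set.range (d j l)) (dU j l))
    (hdL : ∀ j l, IsGLB (Set.range (d j l)) (dL j l))
    (eU eL : Fin m → Fin m → ℝ)
    (heU : ∀ j h, IsLUB (Set.range (e j h)) (eU j h))
    (heL : ∀ j h, IsGLB (Set.range (e j h)) (eL j h))
    -- boundedness of the delays; τ⁺ and η⁺
    (τp : ℝ)
    (hτp : IsLUB (Set.range fun p : (Fin n × Fin n) × ℝ => τ p.1.1 p.1.2 p.2) τp)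
    (ηp : ℝ)
    (hηp : IsLUB (Set.range fun p : (Fin m × Fin m) × ℝ => η p.1.1 p.1.2 p.2) ηp)
    (hδbdd : ∀ i h, BddAbove (Set.range (δ i h)))
    (hξbdd : ∀ j l, BddAbove (Set.range (ξ j l)))
    -- positivity assumptions
    (hbLpos : ∀ i, 0 < bL i) (haLpos : ∀ i, 0 < aL i i) (heLpos : ∀ j, 0 < eL j j)
    -- the permanence bounds
    (xV : Fin n → ℝ)
    (hxV : ∀ i, xV i = Real.log (bU i / aL i i) + bU i * τp)
    (D : Fin m → ℝ)
    (hD : ∀ j, D j = ∑ l, dU j l * Real.exp (xV l))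
    (hDpos : ∀ j, 0 < D j)
    (yV : Fin m → ℝ)
    (hyV : ∀ j, yV j = Real.log (D j / eL j j) + D j * ηp)
    (P : Fin n → ℝ)
    (hP : ∀ i, P i = bL i
      - (∑ l ∈ Finset.univ.filter (fun l => l ≠ i), aU i l * Real.exp (xV l))
      - ∑ h, cU i h * Real.exp (yV h))
    (hPpos : ∀ i, 0 < P i)
    (xW : Fin n → ℝ)
    (hxW : ∀ i, xW i = Real.log (P i / aU i i) - aU i i * Real.exp (xV i) * τp)
    (Q : Fin m → ℝ)
    (hQ : ∀ j, Q j = (∑ l, dL j l * Real.exp (xW l)) - rU j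
      - ∑ h ∈ Finset.univ.filter (fun h => h ≠ j), eU j h * Real.exp (yV h))
    (hQpos : ∀ j, 0 < Q j)
    (yW : Fin m → ℝ)
    (hyW : ∀ j, yW j = Real.log (Q j / eU j j) - eU j j * Real.exp (yV j) * ηp)
    -- a solution of the system on [t0, ∞)
    (x : Fin n → ℝ → ℝ) (y : Fin m → ℝ → ℝ)
    (hxdiff : ∀ i t, t0 ≤ t → DifferentiableAt ℝ (x i) t)
    (hydiff : ∀ j t, t0 ≤ t → DifferentiableAt ℝ (y j) t)
    (hxeq : ∀ i t, t0 ≤ t → deriv (x i) t =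
      b i t - (∑ l, a i l t * Real.exp (x l (t - τ i l t)))
        - ∑ h, c i h t * Real.exp (y h (t - δ i h t)))
    (hyeq : ∀ j t, t0 ≤ t → deriv (y j) t =
      -(r j t) + (∑ l, d j l t * Real.exp (x l (t - ξ j l t)))
        - ∑ h, e j h t * Real.exp (y h (t - η j h t))) :
    (∀ i, ((xW i : ℝ) : EReal) ≤ liminf (fun t => ((x i t : ℝ) : EReal)) atTop ∧
      liminf (fun t => ((x i t : ℝ) : EReal)) atTop ≤
        limsup (fun t => ((x i t : ℝ) : EReal)) atTop ∧
      limsup (fun t => ((x i t : ℝ) : EReal)) atTop ≤ ((xV i : ℝ) : EReal)) ∧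
    (∀ j, ((yW j : ℝ) : EReal) ≤ liminf (fun t => ((y j t : ℝ) : EReal)) atTop ∧
      liminf (fun t => ((y j t : ℝ) : EReal)) atTop ≤
        limsup (fun t => ((y j t : ℝ) : EReal)) atTop ∧
      limsup (fun t => ((y j t : ℝ) : EReal)) atTop ≤ ((yV j : ℝ) : EReal)) := by
  have hτ : ∀ i l t, τ i l t ≤ τp := fun i l t => hτp.1 ⟨((i, l), t), rfl⟩
  have hη : ∀ j h t, η j h t ≤ ηp := fun j h t => hηp.1 ⟨((j, h), t), rfl⟩
  have hxU : ∀ i, UltimatelyLE (x i) (xV i) := fun i =>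
    prey_ultimatelyLE i (hann i) (hcnn i) (hbU i).1
      ((hbLpos i).trans_le (isGLB_le_isLUB (hbL i) (hbU i) (range_nonempty _))) (haL i i).1
      (haLpos i) (hτnn i i) (hτ i i) (hxV i) (hxdiff i) (hxeq i)
  have hyU : ∀ j, UltimatelyLE (y j) (yV j) := fun j =>
    predator_ultimatelyLE j hxU (hξbdd j) (hrnn j) (hdnn j) (fun l => (hdU j l).1) (henn j)
      (heL j j).1 (heLpos j) (hηnn j j) (hη j j) (hD j) (hDpos j) (hyV j) (hydiff j) (hyeq j)
  have hxL : ∀ i, UltimatelyGE (x i) (xW i) := fun i =>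
    prey_ultimatelyGE i hxU hyU (hδbdd i) (hbL i).1 (hann i) (fun l => (haU i l).1)
      ((haLpos i).trans_le (isGLB_le_isLUB (haL i i) (haU i i) (range_nonempty _))) (hcnn i)
      (fun h => (hcU i h).1) (hτnn i i) (hτ i) (hP i) (hPpos i) (hxW i) (hxdiff i) (hxeq i)
  have hyL : ∀ j, UltimatelyGE (y j) (yW j) := fun j =>
    predator_ultimatelyGE j hxL hyU (hξbdd j) (hrU j).1 (hdnn j) (hdL j) (henn j)
      (fun h => (heU j h).1)
      ((heLpos j).trans_le (isGLB_le_isLUB (heL j j) (heU j j) (range_nonempty _))) (hηnn j j)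
      (hη j) (hQ j) (hQpos j) (hyW j) (hydiff j) (hyeq j)
  exact ⟨fun i => ⟨(hxL i).le_liminf, liminf_le_limsup, (hxU i).limsup_le⟩,
    fun j => ⟨(hyL j).le_liminf, liminf_le_limsup, (hyU j).limsup_le⟩⟩

/-- Permanence of the multispecies Lotka–Volterra competition–predation system with
delays on `𝕋 = ℝ` without impulses, in logarithmic coordinates. -/
theorem lotka_volterra_permanence_real
    (n m : ℕ) (hn : 1 ≤ n) (hm : 1 ≤ m) (t0 : ℝ)
    (b : Fin n → ℝ → ℝ) (a : Fin n → Fin n → ℝ → ℝ) (c : Fin n → Fin m → ℝ → ℝ)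
    (r : Fin m → ℝ → ℝ) (d : Fin m → Fin n → ℝ → ℝ) (e : Fin m → Fin m → ℝ → ℝ)
    (τ : Fin n → Fin n → ℝ → ℝ) (δ : Fin n → Fin m → ℝ → ℝ)
    (ξ : Fin m → Fin n → ℝ → ℝ) (η : Fin m → Fin m → ℝ → ℝ)
    -- continuity of the coefficients and delays
    (hbc : ∀ i, Continuous (b i)) (hac : ∀ i l, Continuous (a i l))
    (hcc : ∀ i h, Continuous (c i h)) (hrc : ∀ j, Continuous (r j))
    (hdc : ∀ j l, Continuous (d j l)) (hec : ∀ j h, Continuous (e j h))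
    (hτc : ∀ i l, Continuous (τ i l)) (hδc : ∀ i h, Continuous (δ i h))
    (hξc : ∀ j l, Continuous (ξ j l)) (hηc : ∀ j h, Continuous (η j h))
    -- nonnegativity of the coefficients and delays
    (hbnn : ∀ i t, 0 ≤ b i t) (hann : ∀ i l t, 0 ≤ a i l t)
    (hcnn : ∀ i h t, 0 ≤ c i h t) (hrnn : ∀ j t, 0 ≤ r j t)
    (hdnn : ∀ j l t, 0 ≤ d j l t) (henn : ∀ j h t, 0 ≤ e j h t)
    (hτnn : ∀ i l t, 0 ≤ τ i l t) (hδnn : ∀ i h t, 0 ≤ δ i h t)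
    (hξnn : ∀ j l t, 0 ≤ ξ j l t) (hηnn : ∀ j h t, 0 ≤ η j h t)
    -- suprema and infima of the coefficients (in particular boundedness)
    (bU bL : Fin n → ℝ)
    (hbU : ∀ i, IsLUB (Set.range (b i)) (bU i))
    (hbL : ∀ i, IsGLB (Set.range (b i)) (bL i))
    (aU aL : Fin n → Fin n → ℝ)
    (haU : ∀ i l, IsLUB (Set.range (a i l)) (aU i l))
    (haL : ∀ i l, IsGLB (Set.range (a i l)) (aL i l))
    (cU : Fin n → Fin m → ℝ)
    (hcU : ∀ i h, IsLUB (Set.range (c i h)) (cU i h))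
    (rU : Fin m → ℝ)
    (hrU : ∀ j, IsLUB (Set.range (r j)) (rU j))
    (dU dL : Fin m → Fin n → ℝ)
    (hdU : ∀ j l, IsLUB (Set.range (d j l)) (dU j l))
    (hdL : ∀ j l, IsGLB (Set.range (d j l)) (dL j l))
    (eU eL : Fin m → Fin m → ℝ)
    (heU : ∀ j h, IsLUB (Set.range (e j h)) (eU j h))
    (heL : ∀ j h, IsGLB (Set.range (e j h)) (eL j h))
    -- boundedness of the delays; τ⁺ and η⁺
    (τp : ℝ)
    (hτp : IsLUB (Set.range fun p : (Fin n × Fin n) × ℝ => τ p.1.1 p.1.2 p.2) τp)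
    (ηp : ℝ)
    (hηp : IsLUB (Set.range fun p : (Fin m × Fin m) × ℝ => η p.1.1 p.1.2 p.2) ηp)
    (hδbdd : ∀ i h, BddAbove (Set.range (δ i h)))
    (hξbdd : ∀ j l, BddAbove (Set.range (ξ j l)))
    -- positivity assumptions
    (hbLpos : ∀ i, 0 < bL i) (haLpos : ∀ i, 0 < aL i i) (heLpos : ∀ j, 0 < eL j j)
    -- the permanence bounds
    (xV : Fin n → ℝ)
    (hxV : ∀ i, xV i = Real.log (bU i / aL i i) + bU i * τp)
    (D : Fin m → ℝ)
    (hD : ∀ j, D j = ∑ l, dU j l * Real.exp (xV l))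
    (hDpos : ∀ j, 0 < D j)
    (yV : Fin m → ℝ)
    (hyV : ∀ j, yV j = Real.log (D j / eL j j) + D j * ηp)
    (P : Fin n → ℝ)
    (hP : ∀ i, P i = bL i
      - (∑ l ∈ Finset.univ.filter (fun l => l ≠ i), aU i l * Real.exp (xV l))
      - ∑ h, cU i h * Real.exp (yV h))
    (hPpos : ∀ i, 0 < P i)
    (xW : Fin n → ℝ)
    (hxW : ∀ i, xW i = Real.log (P i / aU i i) - aU i i * Real.exp (xV i) * τp)
    (Q : Fin m → ℝ)
    (hQ : ∀ j, Q j = (∑ l, dL j l * Real.exp (xW l)) - rU j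
      - ∑ h ∈ Finset.univ.filter (fun h => h ≠ j), eU j h * Real.exp (yV h))
    (hQpos : ∀ j, 0 < Q j)
    (yW : Fin m → ℝ)
    (hyW : ∀ j, yW j = Real.log (Q j / eU j j) - eU j j * Real.exp (yV j) * ηp)
    -- a solution of the system on [t0, ∞)
    (x : Fin n → ℝ → ℝ) (y : Fin m → ℝ → ℝ)
    (hxdiff : ∀ i t, t0 ≤ t → DifferentiableAt ℝ (x i) t)
    (hydiff : ∀ j t, t0 ≤ t → DifferentiableAt ℝ (y j) t)
    (hxeq : ∀ i t, t0 ≤ t → deriv (x i) t =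
      b i t - (∑ l, a i l t * Real.exp (x l (t - τ i l t)))
        - ∑ h, c i h t * Real.exp (y h (t - δ i h t)))
    (hyeq : ∀ j t, t0 ≤ t → deriv (y j) t =
      -(r j t) + (∑ l, d j l t * Real.exp (x l (t - ξ j l t)))
        - ∑ h, e j h t * Real.exp (y h (t - η j h t))) :
    (∀ i, ((xW i : ℝ) : EReal) ≤ liminf (fun t => ((x i t : ℝ) : EReal)) atTop ∧
      liminf (fun t => ((x i t : ℝ) : EReal)) atTop ≤
        limsup (fun t => ((x i t : ℝ) : EReal)) atTop ∧
      limsup (fun t => ((x i t : ℝ) : EReal)) atTop ≤ ((xV i : ℝ) : EReal)) ∧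
    (∀ j, ((yW j : ℝ) : EReal) ≤ liminf (fun t => ((y j t : ℝ) : EReal)) atTop ∧
      liminf (fun t => ((y j t : ℝ) : EReal)) atTop ≤
        limsup (fun t => ((y j t : ℝ) : EReal)) atTop ∧
      limsup (fun t => ((y j t : ℝ) : EReal)) atTop ≤ ((yV j : ℝ) : EReal)) :=
  lotka_volterra_permanence_real_general n m t0 b a c r d e τ δ ξ η hann hcnn hrnn hdnn henn hτnn
    hηnn bU bL hbU hbL aU aL haU haL cU hcU rU hrU dU dL hdU hdL eU eL heU heL τp hτp ηp hηp hδbdd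
    hξbdd hbLpos haLpos heLpos xV hxV D hD hDpos yV hyV P hP hPpos xW hxW Q hQ hQpos yW hyW x y
    hxdiff hydiff hxeq hyeq
end

section
/- Fix n, m ≥ 1 and t0 ∈ ℤ. For i, l ∈ {1,…,n} and j, h ∈ {1,…,m}, let b_i, a_{il}, c_{ih}, r_j, d_{jl}, e_{jh} : ℤ → ℝ be nonnegative bounded functions, and let τ_{il}, δ_{ih}, ξ_{jl}, η_{jh} : ℤ → ℕ be bounded delay functions. Write f^U = sup_{t∈ℤ} f(t), f^L = inf_{t∈ℤ} f(t), τ⁺ = max_{i,l} sup τ_{il}, and η⁺ = max_{j,h} sup η_{jh}. Assume b_i^L > 0, a_{ii}^L > 0, e_{jj}^L > 0 and b_i^U < 1 for all i, j. Define x_i^∨ = ln(b_i^U/a_{ii}^L) + b_i^U·τ⁺/(1 − b_i^U); D_j = Σ_{l=1}^n d_{jl}^U·e^{x_l^∨} and y_j^∨ = ln(D_j/e_{jj}^L) + D_j·η⁺/(1 − D_j), assuming 0 < D_j < 1; P_i = b_i^L − Σ_{l≠i} a_{il}^U·e^{x_l^∨} − Σ_{h=1}^m c_{ih}^U·e^{y_h^∨}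 and x_i^∧ = ln(P_i/a_{ii}^U) + τ⁺·ln(1 − a_{ii}^U·e^{x_i^∨}), assuming P_i > 0 and 1 − a_{ii}^U·e^{x_i^∨} > 0; Q_j = Σ_{l=1}^n d_{jl}^L·e^{x_l^∧} − r_j^U − Σ_{h≠j} e_{jh}^U·e^{y_h^∨} and y_j^∧ = ln(Q_j/e_{jj}^U) + η⁺·ln(1 − e_{jj}^U·e^{y_j^∨}), assuming Q_j > 0 and 1 − e_{jj}^U·e^{y_j^∨} > 0. Let x_1,…,x_n, y_1,…,y_m : ℤ → ℝ satisfy, for all t ≥ t0, x_i(t+1) = x_i(t) + b_i(t) − Σ_{l=1}^n a_{il}(t)·exp(x_l(t − τ_{il}(t))) − Σ_{h=1}^m c_{ih}(t)·exp(y_h(t − δ_{ih}(t))) and y_j(t+1) = y_j(t) − r_j(t) + Σ_{l=1}^n d_{jl}(t)·exp(x_l(t − ξ_{jl}(t))) − Σ_{h=1}^m e_{jh}(t)·exp(y_h(t − η_{jh}(t))). Then for every i and j: x_i^∧ ≤ liminf_{t→∞} x_i(t) ≤ limsup_{t→∞} x_i(t) ≤ x_i^∨ and y_j^∧ ≤ liminf_{t→∞}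 y_j(t) ≤ limsup_{t→∞} y_j(t) ≤ y_j^∨. In particular the discrete system is permanent. -/
/-!
Each equation is compared with a scalar delayed feedback inequality
`u (t + 1) ≤ u t + B - A * exp (u (t - k t))` with `k t ≤ τ` (for the upper bounds; its reverse,
with `B` renamed `P`, for the lower ones). If `u` rises at time `t`, then `A e^(u (t - k)) < B`,
i.e. `u (t - k) < K := log (B / A)`; since `u` grows by at most `B` per step and, by convexity of
`exp`, the step from `t` to `t + 1` is at most `B (K - u (t - k))`, after a rise `u` is at most
`K + τ B` (as `B ≤ 1`). On the other hand `u` cannot stay above any `z > K`, as it would then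
decrease by `A e^z - B > 0` at every step. Hence `u` eventually stays below every `z > K + τ B`.
For the lower bounds, once `u ≤ X` a step loses at most `-log (1 - A e^X)`, which replaces `B`.

The four estimates are proved in the order limsup of the prey, limsup of the predators, liminf of
the prey, liminf of the predators: each one inserts the previous ones, relaxed by a margin `s > 0`,
into the coefficients of the scalar inequality, and then lets `s → 0`.
-/

open Filter Real Set Topology

theorem EReal.limsup_coe_le_coe_iff {α : Type*} {f : Filter α} {u : α → ℝ} {M : ℝ} :
    limsup (fun t => (u t : EReal)) f ≤ M ↔ ∀ z > M, ∀ᶠ t in f, u t ≤ z := by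
  rw [limsup_le_iff']
  refine ⟨fun h z hz => (h z (EReal.coe_lt_coe hz)).mono fun _ => EReal.coe_le_coe_iff.1,
    fun h y hy => ?_⟩
  obtain ⟨z, hMz, hzy⟩ := EReal.exists_between_coe_real hy
  exact (h z (EReal.coe_lt_coe_iff.1 hMz)).mono fun t ht => (EReal.coe_le_coe ht).trans hzy.le

theorem EReal.coe_le_liminf_coe_iff {α : Type*} {f : Filter α} {u : α → ℝ} {M : ℝ} :
    (M : EReal) ≤ liminf (fun t => (u t : EReal)) f ↔ ∀ z < M, ∀ᶠ t in f, z ≤ u t := by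
  rw [le_liminf_iff']
  refine ⟨fun h z hz => (h z (EReal.coe_lt_coe hz)).mono fun _ => EReal.coe_le_coe_iff.1,
    fun h y hy => ?_⟩
  obtain ⟨z, hyz, hzM⟩ := EReal.exists_between_coe_real hy
  exact (h z (EReal.coe_lt_coe_iff.1 hzM)).mono fun t ht => hyz.le.trans (EReal.coe_le_coe ht)

theorem EReal.le_coe_of_eventually_nhdsGT {L : EReal} {f : ℝ → ℝ} (hf : ContinuousAt f 0)
    (h : ∀ᶠ s in 𝓝[>] 0, L ≤ f s) : L ≤ f 0 :=
  ge_of_tendsto ((continuous_coe_real_ereal.continuousAt.comp hf).tendsto.mono_left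
    nhdsWithin_le_nhds) h

theorem EReal.coe_le_of_eventually_nhdsGT {L : EReal} {f : ℝ → ℝ} (hf : ContinuousAt f 0)
    (h : ∀ᶠ s in 𝓝[>] 0, (f s : EReal) ≤ L) : (f 0 : EReal) ≤ L :=
  le_of_tendsto ((continuous_coe_real_ereal.continuousAt.comp hf).tendsto.mono_left
    nhdsWithin_le_nhds) h

theorem Filter.Eventually.comp_sub_delay {p : ℤ → Prop} (h : ∀ᶠ t in atTop, p t) {k : ℤ → ℕ}
    (hk : BddAbove (range k)) : ∀ᶠ t in atTop, p (t - k t) := by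
  obtain ⟨K, hK⟩ := hk
  obtain ⟨T, hT⟩ := eventually_atTop.1 h
  filter_upwards [eventually_ge_atTop (T + K)] with t ht
  exact hT _ (by have := hK ⟨t, rfl⟩; omega)

theorem le_add_mul_of_forall_succ_le {u : ℤ → ℝ} {T : ℤ} {c : ℝ}
    (h : ∀ t ≥ T, u (t + 1) ≤ u t + c) {t : ℤ} (ht : T ≤ t) : ∀ k : ℕ, u (t + k) ≤ u t + k * c
  | 0 => by simp
  | k + 1 => by
    have := h (t + k) (by omega)
    have := le_add_mul_of_forall_succ_le h ht k
    push_cast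
    rw [← add_assoc]
    linarith

theorem tendsto_atBot_of_eventually_succ_le_sub {u : ℤ → ℝ} {c : ℝ} (hc : 0 < c)
    (h : ∀ᶠ t in atTop, u (t + 1) ≤ u t - c) : Tendsto u atTop atBot := by
  obtain ⟨T, hT⟩ := eventually_atTop.1 h
  have hdescent := le_add_mul_of_forall_succ_le (c := -c) (fun t ht => (hT t ht).trans_eq
    (sub_eq_add_neg _ _)) le_rfl
  refine tendsto_atBot.2 fun z => ?_
  obtain ⟨N, hN⟩ := exists_nat_gt ((u T - z) / c)
  rw [div_lt_iff₀ hc] at hN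
  filter_upwards [eventually_ge_atTop (T + N)] with t ht
  obtain ⟨k, rfl⟩ : ∃ k : ℕ, t = T + k := ⟨(t - T).toNat, by omega⟩
  have hNk : (N : ℝ) ≤ k := by exact_mod_cast (by omega : N ≤ k)
  linarith [hdescent k, mul_le_mul_of_nonneg_right hNk hc.le]

theorem eventually_le_of_frequently_le_of_rise_le {α : Type*} [LinearOrder α] {u : ℤ → α} {z : α}
    (hrise : ∀ᶠ t in atTop, u t < u (t + 1) → u (t + 1) ≤ z) (hfreq : ∃ᶠ t in atTop, u t ≤ z) :
    ∀ᶠ t in atTop, u t ≤ z := by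
  obtain ⟨T, hT⟩ := eventually_atTop.1 hrise
  obtain ⟨t1, ht1, hu⟩ := frequently_atTop.1 hfreq T
  filter_upwards [eventually_ge_atTop t1] with t ht
  induction t, ht using Int.leInduction with
  | base => exact hu
  | succ s hs ih =>
    rcases le_or_gt (u (s + 1)) (u s) with h | h
    · exact h.trans ih
    · exact hT s (ht1.trans hs) h

theorem frequently_le_of_delayed_feedback {u : ℤ → ℝ} {k : ℤ → ℕ} {A B z : ℝ} (hA : 0 < A)
    (hk : BddAbove (range k)) (hz : B < A * exp z)
    (hu : ∀ᶠ t in atTop, u (t + 1) ≤ u t + B - A * exp (u (t - k t))) :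
    ∃ᶠ t in atTop, u t ≤ z := by
  intro hgt
  simp only [not_le] at hgt
  have hdescent : ∀ᶠ t in atTop, u (t + 1) ≤ u t - (A * exp z - B) := by
    filter_upwards [hu, hgt.comp_sub_delay hk] with t hstep hlag
    linarith [mul_lt_mul_of_pos_left (exp_lt_exp.2 hlag) hA]
  obtain ⟨t, hlow, hhigh⟩ := ((tendsto_atBot_of_eventually_succ_le_sub (sub_pos.2 hz)
    hdescent).eventually_le_atBot z).and hgt |>.exists
  exact (hhigh.trans_le hlow).false

theorem frequently_ge_of_delayed_feedback {u : ℤ → ℝ} {k : ℤ → ℕ} {A P z : ℝ} (hA : 0 < A)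
    (hk : BddAbove (range k)) (hz : A * exp z < P)
    (hu : ∀ᶠ t in atTop, u t + P - A * exp (u (t - k t)) ≤ u (t + 1)) :
    ∃ᶠ t in atTop, z ≤ u t := by
  intro hlt
  simp only [not_le] at hlt
  have hascent : ∀ᶠ t in atTop, -u (t + 1) ≤ -u t - (P - A * exp z) := by
    filter_upwards [hu, hlt.comp_sub_delay hk] with t hstep hlag
    linarith [mul_lt_mul_of_pos_left (exp_lt_exp.2 hlag) hA]
  obtain ⟨t, hhigh, hlow⟩ := (tendsto_neg_atBot_iff.1 (tendsto_atBot_of_eventually_succ_le_sub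
    (sub_pos.2 hz) hascent) |>.eventually_ge_atTop z).and hlt |>.exists
  exact (hlow.trans_le hhigh).false

theorem limsup_le_of_delayed_feedback {u : ℤ → ℝ} {k : ℤ → ℕ} {τ : ℕ} {A B : ℝ} (hA : 0 < A)
    (hB0 : 0 < B) (hB1 : B ≤ 1) (hk : ∀ t, k t ≤ τ)
    (hu : ∀ᶠ t in atTop, u (t + 1) ≤ u t + B - A * exp (u (t - k t))) :
    limsup (fun t => (u t : EReal)) atTop ≤ ((log (B / A) + τ * B : ℝ) : EReal) := by
  set K := log (B / A)
  have hAK : A * exp K = B := by rw [exp_log (div_pos hB0 hA)]; field_simp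
  obtain ⟨T, hT⟩ := eventually_atTop.1 hu
  have hdrift : ∀ t ≥ T, u (t + 1) ≤ u t + B := fun t ht => by
    linarith [hT t ht, mul_pos hA (exp_pos (u (t - k t)))]
  have hrise : ∀ᶠ t in atTop, u t < u (t + 1) → u (t + 1) ≤ K + τ * B := by
    filter_upwards [eventually_ge_atTop (T + τ)] with t ht hlt
    have hkτ := hk t
    have hstep := hT t (by omega)
    set w := u (t - k t)
    have hwK : w < K := exp_lt_exp.1 (lt_of_mul_lt_mul_left (by linarith) hA.le)
    have hwindow : u t ≤ w + k t * B := by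
      simpa using le_add_mul_of_forall_succ_le hdrift (t := t - k t) (by omega) (k t)
    have hconv : B * (1 + (w - K)) ≤ A * exp w := by
      have : A * exp w = B * exp (w - K) := by rw [exp_sub, ← hAK]; field_simp
      rw [this]
      exact mul_le_mul_of_nonneg_left (by linarith [add_one_le_exp (w - K)]) hB0.le
    have : (k t : ℝ) * B ≤ τ * B := mul_le_mul_of_nonneg_right (by exact_mod_cast hkτ) hB0.le
    linarith [mul_nonpos_of_nonneg_of_nonpos (sub_nonneg.2 hB1) (sub_nonpos.2 hwK.le)]
  refine EReal.limsup_coe_le_coe_iff.2 fun z hz => ?_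
  have hKz : K < z := (le_add_of_nonneg_right (by positivity)).trans_lt hz
  exact eventually_le_of_frequently_le_of_rise_le (hrise.mono fun t h hlt => (h hlt).trans hz.le)
    (frequently_le_of_delayed_feedback hA ⟨τ, forall_mem_range.2 hk⟩
      (hAK ▸ mul_lt_mul_of_pos_left (exp_lt_exp.2 hKz) hA) hu)

theorem le_liminf_of_delayed_feedback {u : ℤ → ℝ} {k : ℤ → ℕ} {τ : ℕ} {A P X : ℝ} (hA : 0 < A)
    (hP : 0 < P) (hAX : A * exp X < 1) (hk : ∀ t, k t ≤ τ) (hX : ∀ᶠ t in atTop, u t ≤ X)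
    (hu : ∀ᶠ t in atTop, u t + P - A * exp (u (t - k t)) ≤ u (t + 1)) :
    ((log (P / A) + τ * log (1 - A * exp X) : ℝ) : EReal) ≤
      liminf (fun t => (u t : EReal)) atTop := by
  set K := log (P / A)
  set G := log (1 - A * exp X)
  have hAK : A * exp K = P := by rw [exp_log (div_pos hP hA)]; field_simp
  have hG : G ≤ -(A * exp X) := by linarith [log_le_sub_one_of_pos (sub_pos.2 hAX)]
  have hG0 : G ≤ 0 := hG.trans (neg_nonpos.2 (by positivity))
  have hkbdd : BddAbove (range k) := ⟨τ, forall_mem_range.2 hk⟩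
  obtain ⟨T, hT⟩ := eventually_atTop.1 (hu.and (hX.comp_sub_delay hkbdd))
  have hdrift : ∀ t ≥ T, -u (t + 1) ≤ -u t + -G := fun t ht => by
    obtain ⟨hstep, hlag⟩ := hT t ht
    linarith [mul_le_mul_of_nonneg_left (exp_le_exp.2 hlag) hA.le]
  have hfall : ∀ᶠ t in atTop, u (t + 1) < u t → K + τ * G ≤ u (t + 1) := by
    filter_upwards [eventually_ge_atTop (T + τ)] with t ht hlt
    have hkτ := hk t
    obtain ⟨hstep, hwX⟩ := hT t (by omega)
    set w := u (t - k t)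
    have hKw : K < w := exp_lt_exp.1 (lt_of_mul_lt_mul_left (by linarith) hA.le)
    have hwindow : w + k t * G ≤ u t := by
      have := le_add_mul_of_forall_succ_le (u := fun s => -u s) hdrift (t := t - k t)
        (by omega) (k t)
      simp only [sub_add_cancel] at this
      linarith
    have hconv : A * exp w - P ≤ A * exp X * (w - K) := by
      have h1 : exp w * (1 + (K - w)) ≤ exp K := by
        rw [show K = w + (K - w) by ring, exp_add]
        exact mul_le_mul_of_nonneg_left (by linarith [add_one_le_exp (K - w)]) (exp_pos w).le
      have h2 : exp w * (w - K) ≤ exp X * (w - K) :=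
        mul_le_mul_of_nonneg_right (exp_le_exp.2 hwX) (by linarith)
      rw [← hAK]
      linarith [mul_le_mul_of_nonneg_left h1 hA.le, mul_le_mul_of_nonneg_left h2 hA.le]
    have : (τ : ℝ) * G ≤ k t * G := mul_le_mul_of_nonpos_right (by exact_mod_cast hkτ) hG0
    linarith [mul_nonneg (sub_pos.2 hAX).le (sub_nonneg.2 hKw.le)]
  refine EReal.coe_le_liminf_coe_iff.2 fun z hz => ?_
  have hzK : z < K := hz.trans_le (add_le_of_nonpos_right (mul_nonpos_of_nonneg_of_nonpos
    (by positivity) hG0))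
  exact eventually_le_of_frequently_le_of_rise_le (α := ℝᵒᵈ)
    (hfall.mono fun t h hlt => hz.le.trans (h hlt))
    (frequently_ge_of_delayed_feedback hA hkbdd
      (hAK ▸ mul_lt_mul_of_pos_left (exp_lt_exp.2 hzK) hA) hu)

section DelayedSums

variable {ι : Type*} (S : Finset ι) {w v : ι → ℤ → ℝ} {κ : ι → ℤ → ℕ} {W V : ι → ℝ} {s : ℝ}

theorem eventually_sum_mul_exp_delayed_le (hw : ∀ l t, 0 ≤ w l t) (hW : ∀ l t, w l t ≤ W l)
    (hκ : ∀ l, BddAbove (range (κ l)))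
    (hv : ∀ l, limsup (fun t => (v l t : EReal)) atTop ≤ V l) (hs : 0 < s) :
    ∀ᶠ t in atTop, ∑ l ∈ S, w l t * exp (v l (t - κ l t)) ≤ exp s * ∑ l ∈ S, W l * exp (V l) := by
  have hlag : ∀ᶠ t in atTop, ∀ l ∈ S, v l (t - κ l t) ≤ V l + s :=
    (eventually_all_finset S).2 fun l _ =>
      (EReal.limsup_coe_le_coe_iff.1 (hv l) _ (lt_add_of_pos_right _ hs)).comp_sub_delay (hκ l)
  filter_upwards [hlag] with t ht
  rw [Finset.mul_sum]
  refine Finset.sum_le_sum fun l hl => ?_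
  calc w l t * exp (v l (t - κ l t)) ≤ W l * exp (V l + s) :=
        mul_le_mul (hW l t) (exp_le_exp.2 (ht l hl)) (exp_pos _).le ((hw l t).trans (hW l t))
    _ = exp s * (W l * exp (V l)) := by rw [exp_add]; ring

theorem eventually_le_sum_mul_exp_delayed (hw : ∀ l t, 0 ≤ w l t) (hW : ∀ l t, W l ≤ w l t)
    (hκ : ∀ l, BddAbove (range (κ l)))
    (hv : ∀ l, (V l : EReal) ≤ liminf (fun t => (v l t : EReal)) atTop) (hs : 0 < s) :
    ∀ᶠ t in atTop,
      exp (-s) * ∑ l ∈ S, W l * exp (V l) ≤ ∑ l ∈ S, w l t * exp (v l (t - κ l t)) := by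
  have hlag : ∀ᶠ t in atTop, ∀ l ∈ S, V l - s ≤ v l (t - κ l t) :=
    (eventually_all_finset S).2 fun l _ =>
      (EReal.coe_le_liminf_coe_iff.1 (hv l) _ (sub_lt_self _ hs)).comp_sub_delay (hκ l)
  filter_upwards [hlag] with t ht
  rw [Finset.mul_sum]
  refine Finset.sum_le_sum fun l hl => ?_
  calc exp (-s) * (W l * exp (V l)) = W l * exp (V l - s) := by rw [sub_eq_add_neg, exp_add]; ring
    _ ≤ w l t * exp (v l (t - κ l t)) :=
        mul_le_mul (hW l t) (exp_le_exp.2 (ht l hl)) (exp_pos _).le (hw l t)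

end DelayedSums

theorem mul_le_mul_div_one_sub {B c : ℝ} (hB0 : 0 ≤ B) (hB1 : B < 1) (hc : 0 ≤ c) :
    c * B ≤ B * c / (1 - B) := by
  rw [le_div_iff₀ (sub_pos.2 hB1)]
  nlinarith [mul_nonneg hB0 hc]

section LotkaVolterra

variable {ι ι' : Type*} [Fintype ι] [Fintype ι'] {x : ι → ℤ → ℝ} {y : ι' → ℤ → ℝ} {t0 : ℤ}

theorem limsup_prey_le {b : ℤ → ℝ} {a : ι → ℤ → ℝ} {c : ι' → ℤ → ℝ} {τ : ι → ℤ → ℕ}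
    {δ : ι' → ℤ → ℕ} {i : ι} {bU aL : ℝ} {τp : ℕ} (hb : ∀ t, b t ≤ bU) (hbU0 : 0 < bU)
    (hbU1 : bU < 1) (ha : ∀ l t, 0 ≤ a l t) (haL : ∀ t, aL ≤ a i t) (haL0 : 0 < aL)
    (hc : ∀ h t, 0 ≤ c h t) (hτ : ∀ t, τ i t ≤ τp)
    (hx : ∀ t, t0 ≤ t → x i (t + 1) = x i t + b t - (∑ l, a l t * exp (x l (t - τ l t)))
      - ∑ h, c h t * exp (y h (t - δ h t))) :
    limsup (fun t => (x i t : EReal)) atTop ≤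
      ((log (bU / aL) + bU * τp / (1 - bU) : ℝ) : EReal) := by
  refine (limsup_le_of_delayed_feedback haL0 hbU0 hbU1.le hτ ?_).trans
    (EReal.coe_le_coe_iff.2 (by linarith [mul_le_mul_div_one_sub hbU0.le hbU1 τp.cast_nonneg]))
  filter_upwards [eventually_ge_atTop t0] with t ht
  have hself : aL * exp (x i (t - τ i t)) ≤ ∑ l, a l t * exp (x l (t - τ l t)) :=
    (mul_le_mul_of_nonneg_right (haL t) (exp_pos _).le).trans
      (Finset.single_le_sum (f := fun l => a l t * exp (x l (t - τ l t)))
        (fun l _ => mul_nonneg (ha l t) (exp_pos _).le) (Finset.mem_univ i))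
  have hpred : 0 ≤ ∑ h, c h t * exp (y h (t - δ h t)) :=
    Finset.sum_nonneg fun h _ => mul_nonneg (hc h t) (exp_pos _).le
  rw [hx t ht]
  linarith [hb t]


theorem limsup_predator_le {r : ℤ → ℝ} {d : ι → ℤ → ℝ} {e : ι' → ℤ → ℝ} {ξ : ι → ℤ → ℕ}
    {η : ι' → ℤ → ℕ} {j : ι'} {dU xV : ι → ℝ} {eL D : ℝ} {ηp : ℕ} (hr : ∀ t, 0 ≤ r t)
    (hd : ∀ l t, 0 ≤ d l t) (hdU : ∀ l t, d l t ≤ dU l) (he : ∀ h t, 0 ≤ e h t)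
    (heL : ∀ t, eL ≤ e j t) (heL0 : 0 < eL) (hξ : ∀ l, BddAbove (range (ξ l)))
    (hη : ∀ t, η j t ≤ ηp) (hxV : ∀ l, limsup (fun t => (x l t : EReal)) atTop ≤ xV l)
    (hD : D = ∑ l, dU l * exp (xV l)) (hD0 : 0 < D) (hD1 : D < 1)
    (hy : ∀ t, t0 ≤ t → y j (t + 1) = y j t - r t + (∑ l, d l t * exp (x l (t - ξ l t)))
      - ∑ h, e h t * exp (y h (t - η h t))) :
    limsup (fun t => (y j t : EReal)) atTop ≤
      ((log (D / eL) + D * ηp / (1 - D) : ℝ) : EReal) := by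
  have hsmall : ∀ᶠ s in 𝓝[>] 0, exp s * D < 1 :=
    (ContinuousAt.eventually_lt (by fun_prop) continuousAt_const (by simpa using hD1)).filter_mono
      nhdsWithin_le_nhds
  have hperturbed := EReal.le_coe_of_eventually_nhdsGT
    (L := limsup (fun t => (y j t : EReal)) atTop)
    (f := fun s => log (exp s * D / eL) + ηp * (exp s * D)) (by fun_prop (disch := positivity)) ?_
  · simp only [exp_zero, one_mul] at hperturbed
    exact hperturbed.trans
      (EReal.coe_le_coe_iff.2 (by linarith [mul_le_mul_div_one_sub hD0.le hD1 ηp.cast_nonneg]))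
  filter_upwards [self_mem_nhdsWithin, hsmall] with s (hs : 0 < s) hsD
  refine limsup_le_of_delayed_feedback heL0 (by positivity) hsD.le hη ?_
  filter_upwards [eventually_ge_atTop t0,
    eventually_sum_mul_exp_delayed_le Finset.univ hd hdU hξ hxV hs] with t ht hprey
  have hself : eL * exp (y j (t - η j t)) ≤ ∑ h, e h t * exp (y h (t - η h t)) :=
    (mul_le_mul_of_nonneg_right (heL t) (exp_pos _).le).trans
      (Finset.single_le_sum (f := fun h => e h t * exp (y h (t - η h t)))
        (fun h _ => mul_nonneg (he h t) (exp_pos _).le) (Finset.mem_univ j))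
  rw [← hD] at hprey
  rw [hy t ht]
  linarith [hr t]

theorem le_liminf_prey [DecidableEq ι] {b : ℤ → ℝ} {a : ι → ℤ → ℝ} {c : ι' → ℤ → ℝ}
    {τ : ι → ℤ → ℕ} {δ : ι' → ℤ → ℕ} {i : ι} {aU xV : ι → ℝ} {cU yV : ι' → ℝ} {bL P : ℝ}
    {τp : ℕ} (hbL : ∀ t, bL ≤ b t) (ha : ∀ l t, 0 ≤ a l t) (haU : ∀ l t, a l t ≤ aU l)
    (haU0 : 0 < aU i) (hc : ∀ h t, 0 ≤ c h t) (hcU : ∀ h t, c h t ≤ cU h)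
    (hτ : ∀ l t, τ l t ≤ τp) (hδ : ∀ h, BddAbove (range (δ h)))
    (hxV : ∀ l, limsup (fun t => (x l t : EReal)) atTop ≤ xV l)
    (hyV : ∀ h, limsup (fun t => (y h t : EReal)) atTop ≤ yV h)
    (hP : P = bL - (∑ l ∈ Finset.univ.filter (fun l => l ≠ i), aU l * exp (xV l))
      - ∑ h, cU h * exp (yV h))
    (hP0 : 0 < P) (hax : 0 < 1 - aU i * exp (xV i))
    (hx : ∀ t, t0 ≤ t → x i (t + 1) = x i t + b t - (∑ l, a l t * exp (x l (t - τ l t)))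
      - ∑ h, c h t * exp (y h (t - δ h t))) :
    ((log (P / aU i) + τp * log (1 - aU i * exp (xV i)) : ℝ) : EReal) ≤
      liminf (fun t => (x i t : EReal)) atTop := by
  -- `bL - P` is the pressure of the other species at their upper bounds; a margin `s` on those
  -- bounds multiplies it by `exp s`
  set Pₛ : ℝ → ℝ := fun s => bL - exp s * (bL - P)
  have hsmall : ∀ᶠ s in 𝓝[>] 0, 0 < Pₛ s ∧ aU i * exp (xV i + s) < 1 := by
    refine Filter.Eventually.filter_mono nhdsWithin_le_nhds
      ((ContinuousAt.eventually_lt (by fun_prop) (by fun_prop) ?_).and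
        (ContinuousAt.eventually_lt (by fun_prop) (by fun_prop) ?_))
    · simpa [Pₛ] using hP0
    · simpa using sub_pos.1 hax
  have hperturbed := EReal.coe_le_of_eventually_nhdsGT
    (L := liminf (fun t => (x i t : EReal)) atTop)
    (f := fun s => log (Pₛ s / aU i) + τp * log (1 - aU i * exp (xV i + s)))
    (by fun_prop (disch := simp [Pₛ]; positivity)) ?_
  · simpa [Pₛ] using hperturbed
  filter_upwards [self_mem_nhdsWithin, hsmall] with s (hs : 0 < s) ⟨hPs, hAs⟩
  have hτbdd : ∀ l, BddAbove (range (τ l)) := fun l => ⟨τp, forall_mem_range.2 (hτ l)⟩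
  refine le_liminf_of_delayed_feedback haU0 hPs hAs (hτ i)
    (EReal.limsup_coe_le_coe_iff.1 (hxV i) _ (lt_add_of_pos_right _ hs)) ?_
  filter_upwards [eventually_ge_atTop t0,
    eventually_sum_mul_exp_delayed_le (Finset.univ.filter (fun l => l ≠ i)) ha haU hτbdd hxV hs,
    eventually_sum_mul_exp_delayed_le Finset.univ hc hcU hδ hyV hs] with t ht hcomp hpred
  have hself := mul_le_mul_of_nonneg_right (haU i t) (exp_pos (x i (t - τ i t))).le
  have hsplit : exp s * (bL - P) = exp s * ∑ l ∈ Finset.univ.filter (fun l => l ≠ i),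
      aU l * exp (xV l) + exp s * ∑ h, cU h * exp (yV h) := by rw [hP]; ring
  rw [hx t ht, ← Finset.sum_erase_add _ _ (Finset.mem_univ i)]
  rw [Finset.filter_ne'] at hcomp hsplit
  simp only [Pₛ]
  linarith [hbL t]

theorem le_liminf_predator [DecidableEq ι'] {r : ℤ → ℝ} {d : ι → ℤ → ℝ} {e : ι' → ℤ → ℝ}
    {ξ : ι → ℤ → ℕ} {η : ι' → ℤ → ℕ} {j : ι'} {dL xW : ι → ℝ} {eU yV : ι' → ℝ} {rU Q : ℝ}
    {ηp : ℕ} (hrU : ∀ t, r t ≤ rU) (hd : ∀ l t, 0 ≤ d l t) (hdL : ∀ l t, dL l ≤ d l t)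
    (he : ∀ h t, 0 ≤ e h t) (heU : ∀ h t, e h t ≤ eU h) (heU0 : 0 < eU j)
    (hξ : ∀ l, BddAbove (range (ξ l))) (hη : ∀ h t, η h t ≤ ηp)
    (hxW : ∀ l, (xW l : EReal) ≤ liminf (fun t => (x l t : EReal)) atTop)
    (hyV : ∀ h, limsup (fun t => (y h t : EReal)) atTop ≤ yV h)
    (hQ : Q = (∑ l, dL l * exp (xW l)) - rU
      - ∑ h ∈ Finset.univ.filter (fun h => h ≠ j), eU h * exp (yV h))
    (hQ0 : 0 < Q) (hey : 0 < 1 - eU j * exp (yV j))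
    (hy : ∀ t, t0 ≤ t → y j (t + 1) = y j t - r t + (∑ l, d l t * exp (x l (t - ξ l t)))
      - ∑ h, e h t * exp (y h (t - η h t))) :
    ((log (Q / eU j) + ηp * log (1 - eU j * exp (yV j)) : ℝ) : EReal) ≤
      liminf (fun t => (y j t : EReal)) atTop := by
  set Sd := ∑ l, dL l * exp (xW l)
  set Se := ∑ h ∈ Finset.univ.filter (fun h => h ≠ j), eU h * exp (yV h)
  set Qₛ : ℝ → ℝ := fun s => exp (-s) * Sd - rU - exp s * Se
  have hsmall : ∀ᶠ s in 𝓝[>] 0, 0 < Qₛ s ∧ eU j * exp (yV j + s) < 1 := by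
    refine Filter.Eventually.filter_mono nhdsWithin_le_nhds
      ((ContinuousAt.eventually_lt (by fun_prop) (by fun_prop) ?_).and
        (ContinuousAt.eventually_lt (by fun_prop) (by fun_prop) ?_))
    · simpa [Qₛ, ← hQ] using hQ0
    · simpa using sub_pos.1 hey
  have hperturbed := EReal.coe_le_of_eventually_nhdsGT
    (L := liminf (fun t => (y j t : EReal)) atTop)
    (f := fun s => log (Qₛ s / eU j) + ηp * log (1 - eU j * exp (yV j + s)))
    (by fun_prop (disch := simp [Qₛ, ← hQ]; positivity)) ?_
  · simpa [Qₛ, ← hQ] using hperturbed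
  filter_upwards [self_mem_nhdsWithin, hsmall] with s (hs : 0 < s) ⟨hQs, hAs⟩
  have hηbdd : ∀ h, BddAbove (range (η h)) := fun h => ⟨ηp, forall_mem_range.2 (hη h)⟩
  refine le_liminf_of_delayed_feedback heU0 hQs hAs (hη j)
    (EReal.limsup_coe_le_coe_iff.1 (hyV j) _ (lt_add_of_pos_right _ hs)) ?_
  filter_upwards [eventually_ge_atTop t0,
    eventually_le_sum_mul_exp_delayed Finset.univ hd hdL hξ hxW hs,
    eventually_sum_mul_exp_delayed_le (Finset.univ.filter (fun h => h ≠ j)) he heU hηbdd hyV hs]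
    with t ht hprey hcomp
  have hself := mul_le_mul_of_nonneg_right (heU j t) (exp_pos (y j (t - η j t))).le
  rw [hy t ht, ← Finset.sum_erase_add _ _ (Finset.mem_univ j)]
  rw [Finset.filter_ne'] at hcomp
  simp only [Qₛ, Se, Finset.filter_ne']
  linarith [hrU t]

end LotkaVolterra

theorem lotka_volterra_permanence_int_general
    (n m : ℕ) (t0 : ℤ)
    (b : Fin n → ℤ → ℝ) (a : Fin n → Fin n → ℤ → ℝ) (c : Fin n → Fin m → ℤ → ℝ)
    (r : Fin m → ℤ → ℝ) (d : Fin m → Fin n → ℤ → ℝ) (e : Fin m → Fin m → ℤ → ℝ)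
    (τ : Fin n → Fin n → ℤ → ℕ) (δ : Fin n → Fin m → ℤ → ℕ)
    (ξ : Fin m → Fin n → ℤ → ℕ) (η : Fin m → Fin m → ℤ → ℕ)
    -- nonnegativity of the coefficients
    (hann : ∀ i l t, 0 ≤ a i l t)
    (hcnn : ∀ i h t, 0 ≤ c i h t) (hrnn : ∀ j t, 0 ≤ r j t)
    (hdnn : ∀ j l t, 0 ≤ d j l t) (henn : ∀ j h t, 0 ≤ e j h t)
    -- suprema and infima of the coefficients (in particular boundedness)
    (bU bL : Fin n → ℝ)
    (hbU : ∀ i, IsLUB (Set.range (b i)) (bU i))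
    (hbL : ∀ i, IsGLB (Set.range (b i)) (bL i))
    (aU aL : Fin n → Fin n → ℝ)
    (haU : ∀ i l, IsLUB (Set.range (a i l)) (aU i l))
    (haL : ∀ i l, IsGLB (Set.range (a i l)) (aL i l))
    (cU : Fin n → Fin m → ℝ)
    (hcU : ∀ i h, IsLUB (Set.range (c i h)) (cU i h))
    (rU : Fin m → ℝ)
    (hrU : ∀ j, IsLUB (Set.range (r j)) (rU j))
    (dU dL : Fin m → Fin n → ℝ)
    (hdU : ∀ j l, IsLUB (Set.range (d j l)) (dU j l))
    (hdL : ∀ j l, IsGLB (Set.range (d j l)) (dL j l))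
    (eU eL : Fin m → Fin m → ℝ)
    (heU : ∀ j h, IsLUB (Set.range (e j h)) (eU j h))
    (heL : ∀ j h, IsGLB (Set.range (e j h)) (eL j h))
    -- boundedness of the delays; τ⁺ and η⁺
    (τp : ℕ)
    (hτp : IsLUB (Set.range fun p : (Fin n × Fin n) × ℤ => τ p.1.1 p.1.2 p.2) τp)
    (ηp : ℕ)
    (hηp : IsLUB (Set.range fun p : (Fin m × Fin m) × ℤ => η p.1.1 p.1.2 p.2) ηp)
    (hδbdd : ∀ i h, BddAbove (Set.range (δ i h)))
    (hξbdd : ∀ j l, BddAbove (Set.range (ξ j l)))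
    -- positivity and smallness assumptions
    (hbLpos : ∀ i, 0 < bL i) (haLpos : ∀ i, 0 < aL i i) (heLpos : ∀ j, 0 < eL j j)
    (hbU1 : ∀ i, bU i < 1)
    -- the permanence bounds
    (xV : Fin n → ℝ)
    (hxV : ∀ i, xV i = Real.log (bU i / aL i i) + bU i * (τp : ℝ) / (1 - bU i))
    (D : Fin m → ℝ)
    (hD : ∀ j, D j = ∑ l, dU j l * Real.exp (xV l))
    (hDpos : ∀ j, 0 < D j) (hD1 : ∀ j, D j < 1)
    (yV : Fin m → ℝ)
    (hyV : ∀ j, yV j = Real.log (D j / eL j j) + D j * (ηp : ℝ) / (1 - D j))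
    (P : Fin n → ℝ)
    (hP : ∀ i, P i = bL i
      - (∑ l ∈ Finset.univ.filter (fun l => l ≠ i), aU i l * Real.exp (xV l))
      - ∑ h, cU i h * Real.exp (yV h))
    (hPpos : ∀ i, 0 < P i)
    (hax : ∀ i, 0 < 1 - aU i i * Real.exp (xV i))
    (xW : Fin n → ℝ)
    (hxW : ∀ i, xW i = Real.log (P i / aU i i)
      + (τp : ℝ) * Real.log (1 - aU i i * Real.exp (xV i)))
    (Q : Fin m → ℝ)
    (hQ : ∀ j, Q j = (∑ l, dL j l * Real.exp (xW l)) - rU j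
      - ∑ h ∈ Finset.univ.filter (fun h => h ≠ j), eU j h * Real.exp (yV h))
    (hQpos : ∀ j, 0 < Q j)
    (hey : ∀ j, 0 < 1 - eU j j * Real.exp (yV j))
    (yW : Fin m → ℝ)
    (hyW : ∀ j, yW j = Real.log (Q j / eU j j)
      + (ηp : ℝ) * Real.log (1 - eU j j * Real.exp (yV j)))
    -- a solution of the discrete system on [t0, ∞)
    (x : Fin n → ℤ → ℝ) (y : Fin m → ℤ → ℝ)
    (hxeq : ∀ i t, t0 ≤ t → x i (t + 1) =
      x i t + b i t - (∑ l, a i l t * Real.exp (x l (t - (τ i l t : ℤ))))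
        - ∑ h, c i h t * Real.exp (y h (t - (δ i h t : ℤ))))
    (hyeq : ∀ j t, t0 ≤ t → y j (t + 1) =
      y j t - r j t + (∑ l, d j l t * Real.exp (x l (t - (ξ j l t : ℤ))))
        - ∑ h, e j h t * Real.exp (y h (t - (η j h t : ℤ)))) :
    (∀ i, ((xW i : ℝ) : EReal) ≤ liminf (fun t : ℤ => ((x i t : ℝ) : EReal)) atTop ∧
      liminf (fun t : ℤ => ((x i t : ℝ) : EReal)) atTop ≤
        limsup (fun t : ℤ => ((x i t : ℝ) : EReal)) atTop ∧
      limsup (fun t : ℤ => ((x i t : ℝ) : EReal)) atTop ≤ ((xV i : ℝ) : EReal)) ∧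
    (∀ j, ((yW j : ℝ) : EReal) ≤ liminf (fun t : ℤ => ((y j t : ℝ) : EReal)) atTop ∧
      liminf (fun t : ℤ => ((y j t : ℝ) : EReal)) atTop ≤
        limsup (fun t : ℤ => ((y j t : ℝ) : EReal)) atTop ∧
      limsup (fun t : ℤ => ((y j t : ℝ) : EReal)) atTop ≤ ((yV j : ℝ) : EReal)) := by
  have hτ : ∀ i l t, τ i l t ≤ τp := fun i l t => hτp.1 ⟨((i, l), t), rfl⟩
  have hη : ∀ j h t, η j h t ≤ ηp := fun j h t => hηp.1 ⟨((j, h), t), rfl⟩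
  have hbU0 : ∀ i, 0 < bU i := fun i =>
    (hbLpos i).trans_le (isGLB_le_isLUB (hbL i) (hbU i) (range_nonempty _))
  have haU0 : ∀ i, 0 < aU i i := fun i =>
    (haLpos i).trans_le (isGLB_le_isLUB (haL i i) (haU i i) (range_nonempty _))
  have heU0 : ∀ j, 0 < eU j j := fun j =>
    (heLpos j).trans_le (isGLB_le_isLUB (heL j j) (heU j j) (range_nonempty _))
  have hxU : ∀ i, limsup (fun t => (x i t : EReal)) atTop ≤ xV i := fun i => by
    rw [hxV i]
    exact limsup_prey_le (fun t => (hbU i).1 ⟨t, rfl⟩) (hbU0 i) (hbU1 i) (hann i)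
      (fun t => (haL i i).1 ⟨t, rfl⟩) (haLpos i) (hcnn i) (hτ i i) (hxeq i)
  have hyU : ∀ j, limsup (fun t => (y j t : EReal)) atTop ≤ yV j := fun j => by
    rw [hyV j]
    exact limsup_predator_le (hrnn j) (hdnn j) (fun l t => (hdU j l).1 ⟨t, rfl⟩) (henn j)
      (fun t => (heL j j).1 ⟨t, rfl⟩) (heLpos j) (hξbdd j) (hη j j) hxU (hD j) (hDpos j)
      (hD1 j) (hyeq j)
  have hxL : ∀ i, (xW i : EReal) ≤ liminf (fun t => (x i t : EReal)) atTop := fun i => by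
    rw [hxW i]
    exact le_liminf_prey (fun t => (hbL i).1 ⟨t, rfl⟩) (hann i)
      (fun l t => (haU i l).1 ⟨t, rfl⟩) (haU0 i) (hcnn i) (fun h t => (hcU i h).1 ⟨t, rfl⟩)
      (hτ i) (hδbdd i) hxU hyU (hP i) (hPpos i) (hax i) (hxeq i)
  have hyL : ∀ j, (yW j : EReal) ≤ liminf (fun t => (y j t : EReal)) atTop := fun j => by
    rw [hyW j]
    exact le_liminf_predator (fun t => (hrU j).1 ⟨t, rfl⟩) (hdnn j)
      (fun l t => (hdL j l).1 ⟨t, rfl⟩) (henn j) (fun h t => (heU j h).1 ⟨t, rfl⟩) (heU0 j)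
      (hξbdd j) (hη j) hxL hyU (hQ j) (hQpos j) (hey j) (hyeq j)
  exact ⟨fun i => ⟨hxL i, liminf_le_limsup, hxU i⟩, fun j => ⟨hyL j, liminf_le_limsup, hyU j⟩⟩

/-- Permanence of the discrete multispecies Lotka–Volterra competition–predation
system with delays (`𝕋 = ℤ`, no impulses), in logarithmic coordinates. -/
theorem lotka_volterra_permanence_int
    (n m : ℕ) (hn : 1 ≤ n) (hm : 1 ≤ m) (t0 : ℤ)
    (b : Fin n → ℤ → ℝ) (a : Fin n → Fin n → ℤ → ℝ) (c : Fin n → Fin m → ℤ → ℝ)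
    (r : Fin m → ℤ → ℝ) (d : Fin m → Fin n → ℤ → ℝ) (e : Fin m → Fin m → ℤ → ℝ)
    (τ : Fin n → Fin n → ℤ → ℕ) (δ : Fin n → Fin m → ℤ → ℕ)
    (ξ : Fin m → Fin n → ℤ → ℕ) (η : Fin m → Fin m → ℤ → ℕ)
    -- nonnegativity of the coefficients
    (hbnn : ∀ i t, 0 ≤ b i t) (hann : ∀ i l t, 0 ≤ a i l t)
    (hcnn : ∀ i h t, 0 ≤ c i h t) (hrnn : ∀ j t, 0 ≤ r j t)
    (hdnn : ∀ j l t, 0 ≤ d j l t) (henn : ∀ j h t, 0 ≤ e j h t)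
    -- suprema and infima of the coefficients (in particular boundedness)
    (bU bL : Fin n → ℝ)
    (hbU : ∀ i, IsLUB (Set.range (b i)) (bU i))
    (hbL : ∀ i, IsGLB (Set.range (b i)) (bL i))
    (aU aL : Fin n → Fin n → ℝ)
    (haU : ∀ i l, IsLUB (Set.range (a i l)) (aU i l))
    (haL : ∀ i l, IsGLB (Set.range (a i l)) (aL i l))
    (cU : Fin n → Fin m → ℝ)
    (hcU : ∀ i h, IsLUB (Set.range (c i h)) (cU i h))
    (rU : Fin m → ℝ)
    (hrU : ∀ j, IsLUB (Set.range (r j)) (rU j))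
    (dU dL : Fin m → Fin n → ℝ)
    (hdU : ∀ j l, IsLUB (Set.range (d j l)) (dU j l))
    (hdL : ∀ j l, IsGLB (Set.range (d j l)) (dL j l))
    (eU eL : Fin m → Fin m → ℝ)
    (heU : ∀ j h, IsLUB (Set.range (e j h)) (eU j h))
    (heL : ∀ j h, IsGLB (Set.range (e j h)) (eL j h))
    -- boundedness of the delays; τ⁺ and η⁺
    (τp : ℕ)
    (hτp : IsLUB (Set.range fun p : (Fin n × Fin n) × ℤ => τ p.1.1 p.1.2 p.2) τp)
    (ηp : ℕ)
    (hηp : IsLUB (Set.range fun p : (Fin m × Fin m) × ℤ => η p.1.1 p.1.2 p.2) ηp)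
    (hδbdd : ∀ i h, BddAbove (Set.range (δ i h)))
    (hξbdd : ∀ j l, BddAbove (Set.range (ξ j l)))
    -- positivity and smallness assumptions
    (hbLpos : ∀ i, 0 < bL i) (haLpos : ∀ i, 0 < aL i i) (heLpos : ∀ j, 0 < eL j j)
    (hbU1 : ∀ i, bU i < 1)
    -- the permanence bounds
    (xV : Fin n → ℝ)
    (hxV : ∀ i, xV i = Real.log (bU i / aL i i) + bU i * (τp : ℝ) / (1 - bU i))
    (D : Fin m → ℝ)
    (hD : ∀ j, D j = ∑ l, dU j l * Real.exp (xV l))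
    (hDpos : ∀ j, 0 < D j) (hD1 : ∀ j, D j < 1)
    (yV : Fin m → ℝ)
    (hyV : ∀ j, yV j = Real.log (D j / eL j j) + D j * (ηp : ℝ) / (1 - D j))
    (P : Fin n → ℝ)
    (hP : ∀ i, P i = bL i
      - (∑ l ∈ Finset.univ.filter (fun l => l ≠ i), aU i l * Real.exp (xV l))
      - ∑ h, cU i h * Real.exp (yV h))
    (hPpos : ∀ i, 0 < P i)
    (hax : ∀ i, 0 < 1 - aU i i * Real.exp (xV i))
    (xW : Fin n → ℝ)
    (hxW : ∀ i, xW i = Real.log (P i / aU i i)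
      + (τp : ℝ) * Real.log (1 - aU i i * Real.exp (xV i)))
    (Q : Fin m → ℝ)
    (hQ : ∀ j, Q j = (∑ l, dL j l * Real.exp (xW l)) - rU j
      - ∑ h ∈ Finset.univ.filter (fun h => h ≠ j), eU j h * Real.exp (yV h))
    (hQpos : ∀ j, 0 < Q j)
    (hey : ∀ j, 0 < 1 - eU j j * Real.exp (yV j))
    (yW : Fin m → ℝ)
    (hyW : ∀ j, yW j = Real.log (Q j / eU j j)
      + (ηp : ℝ) * Real.log (1 - eU j j * Real.exp (yV j)))
    -- a solution of the discrete system on [t0, ∞)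
    (x : Fin n → ℤ → ℝ) (y : Fin m → ℤ → ℝ)
    (hxeq : ∀ i t, t0 ≤ t → x i (t + 1) =
      x i t + b i t - (∑ l, a i l t * Real.exp (x l (t - (τ i l t : ℤ))))
        - ∑ h, c i h t * Real.exp (y h (t - (δ i h t : ℤ))))
    (hyeq : ∀ j t, t0 ≤ t → y j (t + 1) =
      y j t - r j t + (∑ l, d j l t * Real.exp (x l (t - (ξ j l t : ℤ))))
        - ∑ h, e j h t * Real.exp (y h (t - (η j h t : ℤ)))) :
    (∀ i, ((xW i : ℝ) : EReal) ≤ liminf (fun t : ℤ => ((x i t : ℝ) : EReal)) atTop ∧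
      liminf (fun t : ℤ => ((x i t : ℝ) : EReal)) atTop ≤
        limsup (fun t : ℤ => ((x i t : ℝ) : EReal)) atTop ∧
      limsup (fun t : ℤ => ((x i t : ℝ) : EReal)) atTop ≤ ((xV i : ℝ) : EReal)) ∧
    (∀ j, ((yW j : ℝ) : EReal) ≤ liminf (fun t : ℤ => ((y j t : ℝ) : EReal)) atTop ∧
      liminf (fun t : ℤ => ((y j t : ℝ) : EReal)) atTop ≤
        limsup (fun t : ℤ => ((y j t : ℝ) : EReal)) atTop ∧
      limsup (fun t : ℤ => ((y j t : ℝ) : EReal)) atTop ≤ ((yV j : ℝ) : EReal)) :=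
  lotka_volterra_permanence_int_general n m t0 b a c r d e τ δ ξ η hann hcnn hrnn hdnn henn bU bL
    hbU hbL aU aL haU haL cU hcU rU hrU dU dL hdU hdL eU eL heU heL τp hτp ηp hηp hδbdd hξbdd hbLpos
    haLpos heLpos hbU1 xV hxV D hD hDpos hD1 yV hyV P hP hPpos hax xW hxW Q hQ hQpos hey yW hyW x y
    hxeq hyeq
end
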